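/- arXiv:1610.06058 — 8 statements merged into one kernel-verified Lean document; each statement's English description precedes it below -/
import Mathlib

section
/- For every finite simple graph G, the number of maximal independent sets of G is at most 2^β(G), where β(G) is the vertex covering number of G. -/
variable {V : Type*}

/-- `S` is an independent set of `G`: no two vertices of `S` are adjacent. -/
def IsIndepSet (G : SimpleGraph V) (S : Set V) : Prop :=
  ∀ ⦃u v : V⦄, u ∈ S → v ∈ S → ¬ G.Adj u v

/-- `S` is a maximal independent set of `G`. -/
def IsMaxIndepSet (G : SimpleGraph V) (S : Set V) : Prop :=
  IsIndepSet G S ∧ ∀ T : Set V, IsIndepSet G T → S ⊆ T → S = T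

/-- `m(G)`: the number of maximal independent sets of `G`. -/
noncomputable def numMaxIndep (G : SimpleGraph V) : ℕ :=
  {S : Set V | IsMaxIndepSet G S}.ncard

/-- `C` is a vertex cover of `G`: every edge has at least one endpoint in `C`. -/
def IsVertexCover (G : SimpleGraph V) (C : Set V) : Prop :=
  ∀ ⦃u v : V⦄, G.Adj u v → u ∈ C ∨ v ∈ C

/-- `β(G)`: the minimum size of a vertex cover of `G`. -/
noncomputable def coverNumber (G : SimpleGraph V) : ℕ :=
  sInf {n : ℕ | ∃ C : Set V, IsVertexCover G C ∧ C.ncard = n}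

/-- `M` is a matching of `G`: a set of edges of `G`, pairwise sharing no vertex. -/
def IsMatching (G : SimpleGraph V) (M : Set (Sym2 V)) : Prop :=
  M ⊆ G.edgeSet ∧ ∀ e ∈ M, ∀ f ∈ M, e ≠ f → ∀ v : V, v ∈ e → v ∉ f

/-- `M` is an induced matching of `G`: a matching such that no two distinct
edges of `M` are joined by an edge of `G`. -/
def IsInducedMatching (G : SimpleGraph V) (M : Set (Sym2 V)) : Prop :=
  IsMatching G M ∧ ∀ e ∈ M, ∀ f ∈ M, e ≠ f → ∀ u v : V, u ∈ e → v ∈ f → ¬ G.Adj u v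

/-- `ν(G)`: the maximum size of a matching of `G`. -/
noncomputable def matchingNumber (G : SimpleGraph V) : ℕ :=
  sSup {n : ℕ | ∃ M : Set (Sym2 V), IsMatching G M ∧ M.ncard = n}

/-- `ν₀(G)`: the maximum size of an induced matching of `G`. -/
noncomputable def inducedMatchingNumber (G : SimpleGraph V) : ℕ :=
  sSup {n : ℕ | ∃ M : Set (Sym2 V), IsInducedMatching G M ∧ M.ncard = n}

/-- `G` is bipartite: the vertices split into two sides with every edge crossing. -/
def IsBipartite (G : SimpleGraph V) : Prop :=
  ∃ A : Set V, ∀ ⦃u v : V⦄, G.Adj u v → (u ∈ A ↔ v ∉ A)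

/-!
A maximal independent set `S` is determined by its trace `S ∩ C` on a vertex cover `C`:
a vertex `v ∉ C` has all its neighbours in `C`, and by maximality `v ∈ S` exactly when none
of them lies in `S`. Hence `S ↦ S ∩ C` embeds the maximal independent sets into `𝒫 C`.
-/

section

variable {G : SimpleGraph V} {S C : Set V} {v : V}

lemma IsIndepSet.insert (hS : IsIndepSet G S) (hv : ∀ u ∈ S, ¬ G.Adj v u) :
    IsIndepSet G (insert v S) := by
  rintro a b (rfl | ha) (rfl | hb) hab
  · exact G.loopless.irrefl _ hab
  · exact hv b hb hab
  · exact hv a ha hab.symm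
  · exact hS ha hb hab

lemma IsMaxIndepSet.exists_adj_of_notMem (hS : IsMaxIndepSet G S) (hv : v ∉ S) :
    ∃ u ∈ S, G.Adj v u := by
  by_contra! h
  exact hv ((hS.2 _ (hS.1.insert h) (Set.subset_insert v S)) ▸ Set.mem_insert v S)

lemma IsMaxIndepSet.mem_iff_of_notMem_cover (hS : IsMaxIndepSet G S) (hC : IsVertexCover G C)
    (hv : v ∉ C) : v ∈ S ↔ ∀ u ∈ S ∩ C, ¬ G.Adj v u := by
  refine ⟨fun hvS u hu => hS.1 hvS hu.1, fun h => ?_⟩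
  by_contra hvS
  obtain ⟨u, huS, hvu⟩ := hS.exists_adj_of_notMem hvS
  exact h u ⟨huS, (hC hvu).resolve_left hv⟩ hvu

lemma IsVertexCover.injOn_inter (hC : IsVertexCover G C) :
    Set.InjOn (· ∩ C) {S | IsMaxIndepSet G S} := by
  intro S₁ h₁ S₂ h₂ (heq : S₁ ∩ C = S₂ ∩ C)
  ext v
  by_cases hv : v ∈ C
  · simpa [hv] using Set.ext_iff.1 heq v
  · rw [h₁.mem_iff_of_notMem_cover hC hv, h₂.mem_iff_of_notMem_cover hC hv, heq]

lemma IsVertexCover.numMaxIndep_le (hC : IsVertexCover G C) (hfin : C.Finite) :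
    numMaxIndep G ≤ 2 ^ C.ncard :=
  calc numMaxIndep G ≤ (𝒫 C).ncard :=
        Set.ncard_le_ncard_of_injOn _ (fun _ _ => Set.inter_subset_right) hC.injOn_inter
          hfin.powerset
    _ = 2 ^ C.ncard := Set.ncard_powerset C hfin

end

/-- For infinite `V` the witness may be an infinite cover, whose `ncard` is the junk value `0`. -/
lemma exists_isVertexCover_ncard_eq_coverNumber (G : SimpleGraph V) :
    ∃ C : Set V, IsVertexCover G C ∧ C.ncard = coverNumber G :=
  Nat.sInf_mem (s := {n | ∃ C : Set V, IsVertexCover G C ∧ C.ncard = n})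
    ⟨_, Set.univ, fun u _ _ => Or.inl (Set.mem_univ u), rfl⟩

/-- For every finite simple graph `G`, `m(G) ≤ 2 ^ β(G)`. -/
theorem numMaxIndep_le_two_pow_coverNumber [Fintype V] (G : SimpleGraph V) :
    numMaxIndep G ≤ 2 ^ coverNumber G := by
  obtain ⟨C, hC, hcard⟩ := exists_isVertexCover_ncard_eq_coverNumber G
  exact hcard ▸ hC.numMaxIndep_le C.toFinite
end

section
/- For a finite simple graph G, the number of maximal independent sets of G equals 2^β(G) if and only if G is bipartite and its induced matching number equals its matching number (i.e., G is a Cameron-Walker bipartite graph). -/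
variable {V : Type*}

section Aux
variable [Fintype V] (G : SimpleGraph V)
set_option linter.unusedSectionVars false

/-- a minimum vertex cover exists -/
lemma CW_exists_min_cover : ∃ C : Set V, IsVertexCover G C ∧ C.ncard = coverNumber G := by
  have hne : {n : ℕ | ∃ C : Set V, IsVertexCover G C ∧ C.ncard = n}.Nonempty :=
    ⟨(Set.univ : Set V).ncard, Set.univ, fun u v _ => Or.inl (Set.mem_univ u), rfl⟩
  have := Nat.sInf_mem hne
  obtain ⟨C, hC, hcard⟩ := this
  exact ⟨C, hC, hcard⟩

lemma CW_coverNumber_le {C : Set V} (hC : IsVertexCover G C) : coverNumber G ≤ C.ncard :=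
  Nat.sInf_le ⟨C, hC, rfl⟩

/-- any matching is at most any vertex cover in size -/
lemma CW_matching_le_cover {M : Set (Sym2 V)} {C : Set V}
    (hM : IsMatching G M) (hC : IsVertexCover G C) : M.ncard ≤ C.ncard := by
  classical
  have hsel : ∀ e ∈ M, ∃ v : V, v ∈ e ∧ v ∈ C := by
    intro e he
    induction e using Sym2.ind with
    | _ x y =>
      have hadj : G.Adj x y := (SimpleGraph.mem_edgeSet G).mp (hM.1 he)
      rcases hC hadj with h | h
      · exact ⟨x, by simp, h⟩
      · exact ⟨y, by simp, h⟩
  choose F hF1 hF2 using hsel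
  have hMfin : M.Finite := Set.toFinite M
  have hCfin : C.Finite := Set.toFinite C
  rw [← Nat.card_coe_set_eq, ← Nat.card_coe_set_eq]
  have : Finite ↥C := hCfin
  refine Nat.card_le_card_of_injective (fun e => (⟨F e.1 e.2, hF2 e.1 e.2⟩ : ↥C)) ?_
  rintro ⟨e, he⟩ ⟨f, hf⟩ hef
  simp only [Subtype.mk.injEq] at hef ⊢
  by_contra hne
  exact hM.2 e he f hf hne _ (hF1 e he) (hef ▸ hF1 f hf)

lemma CW_matching_le_coverNumber {M : Set (Sym2 V)} (hM : IsMatching G M) :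
    M.ncard ≤ coverNumber G := by
  obtain ⟨C, hC, hcard⟩ := CW_exists_min_cover G
  exact hcard ▸ CW_matching_le_cover G hM hC

lemma CW_matchSet_bdd :
    BddAbove {n : ℕ | ∃ M : Set (Sym2 V), IsMatching G M ∧ M.ncard = n} := by
  refine ⟨coverNumber G, ?_⟩
  rintro n ⟨M, hM, rfl⟩
  exact CW_matching_le_coverNumber G hM

lemma CW_indMatchSet_bdd :
    BddAbove {n : ℕ | ∃ M : Set (Sym2 V), IsInducedMatching G M ∧ M.ncard = n} := by
  refine ⟨coverNumber G, ?_⟩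
  rintro n ⟨M, hM, rfl⟩
  exact CW_matching_le_coverNumber G hM.1

lemma CW_empty_matching : IsMatching G (∅ : Set (Sym2 V)) :=
  ⟨Set.empty_subset _, fun e he => absurd he (Set.notMem_empty e)⟩

lemma CW_le_matchingNumber {M : Set (Sym2 V)} (hM : IsMatching G M) :
    M.ncard ≤ matchingNumber G :=
  le_csSup (CW_matchSet_bdd G) ⟨M, hM, rfl⟩

lemma CW_le_inducedMatchingNumber {M : Set (Sym2 V)} (hM : IsInducedMatching G M) :
    M.ncard ≤ inducedMatchingNumber G :=
  le_csSup (CW_indMatchSet_bdd G) ⟨M, hM, rfl⟩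

lemma CW_matchingNumber_le_coverNumber : matchingNumber G ≤ coverNumber G := by
  refine csSup_le ⟨0, ∅, CW_empty_matching G, Set.ncard_empty _⟩ ?_
  rintro n ⟨M, hM, rfl⟩
  exact CW_matching_le_coverNumber G hM

lemma CW_inducedMatchingNumber_le_matchingNumber :
    inducedMatchingNumber G ≤ matchingNumber G := by
  refine csSup_le_csSup (CW_matchSet_bdd G)
    ⟨0, ∅, ⟨CW_empty_matching G, fun e he => absurd he (Set.notMem_empty e)⟩, Set.ncard_empty _⟩ ?_
  rintro n ⟨M, hM, rfl⟩
  exact ⟨M, hM.1, rfl⟩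

lemma CW_exists_max_inducedMatching :
    ∃ M : Set (Sym2 V), IsInducedMatching G M ∧ M.ncard = inducedMatchingNumber G := by
  have h := Nat.sSup_mem (s := {n : ℕ | ∃ M : Set (Sym2 V), IsInducedMatching G M ∧ M.ncard = n})
    ⟨0, ∅, ⟨CW_empty_matching G, fun e he => absurd he (Set.notMem_empty e)⟩, Set.ncard_empty _⟩
    (CW_indMatchSet_bdd G)
  exact h

end Aux

/-- extension of a subset `T` of a cover `C` to a candidate maximal independent set -/
def CWext (G : SimpleGraph V) (C T : Set V) : Set V :=
  T ∪ {v | v ∉ C ∧ ∀ w ∈ T, ¬ G.Adj v w}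

/-- `C` is a minimum vertex cover which is independent and each of its vertices has a
pendant neighbor. -/
def CWGood (G : SimpleGraph V) (C : Set V) : Prop :=
  IsVertexCover G C ∧ C.ncard = coverNumber G ∧ IsIndepSet G C ∧
    ∀ u ∈ C, ∃ v, G.Adj u v ∧ ∀ w, G.Adj v w → w = u

section Core
variable {G : SimpleGraph V} {C T S : Set V}
set_option linter.unusedSectionVars false

lemma CWext_inter (hT : T ⊆ C) : CWext G C T ∩ C = T := by
  ext v
  constructor
  · rintro ⟨hv | hv, hvC⟩
    · exact hv
    · exact absurd hvC hv.1
  · intro hv; exact ⟨Or.inl hv, hT hv⟩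

lemma CWext_indep (hC : IsVertexCover G C) (hTind : IsIndepSet G T) :
    IsIndepSet G (CWext G C T) := by
  rintro u v (hu | hu) (hv | hv) hadj
  · exact hTind hu hv hadj
  · exact hv.2 u hu hadj.symm
  · exact hu.2 v hv hadj
  · rcases hC hadj with h | h
    · exact hu.1 h
    · exact hv.1 h

lemma CW_MIS_eq_ext (hC : IsVertexCover G C) (hS : IsMaxIndepSet G S) :
    S = CWext G C (S ∩ C) := by
  have hsub : S ⊆ CWext G C (S ∩ C) := by
    intro v hv
    by_cases hvC : v ∈ C
    · exact Or.inl ⟨hv, hvC⟩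
    · exact Or.inr ⟨hvC, fun w hw => hS.1 hv hw.1⟩
  exact hS.2 _ (CWext_indep hC (fun u v hu hv => hS.1 hu.1 hv.1)) hsub

lemma CWext_max (hG : CWGood G C) (hT : T ⊆ C) : IsMaxIndepSet G (CWext G C T) := by
  obtain ⟨hC, -, hCind, hpend⟩ := hG
  refine ⟨CWext_indep hC (fun u v hu hv => hCind (hT hu) (hT hv)), ?_⟩
  intro T' hT'ind hsub
  refine Set.Subset.antisymm hsub ?_
  intro x hx
  by_contra hxe
  by_cases hxC : x ∈ C
  · have hxT : x ∉ T := fun h => hxe (Or.inl h)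
    obtain ⟨v, hadj, hv⟩ := hpend x hxC
    have hvC : v ∉ C := fun hvC => hCind hxC hvC hadj
    have hvE : v ∈ CWext G C T := by
      refine Or.inr ⟨hvC, fun w hw hadj' => ?_⟩
      exact hxT ((hv w hadj') ▸ hw)
    exact hT'ind hx (hsub hvE) hadj
  · have : ¬ (x ∉ C ∧ ∀ w ∈ T, ¬ G.Adj x w) := fun h => hxe (Or.inr h)
    push_neg at this
    obtain ⟨w, hw, hadj⟩ := this hxC
    exact hT'ind hx (hsub (Or.inl hw)) hadj

lemma CW_card_subsets [Fintype V] (C : Set V) :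
    Nat.card {T : Set V // T ⊆ C} = 2 ^ C.ncard := by
  classical
  have e : {T : Set V // T ⊆ C} ≃ Set ↥C :=
    { toFun := fun T => {x : ↥C | ↑x ∈ T.1}
      invFun := fun U => ⟨Subtype.val '' U, by rintro _ ⟨x, _, rfl⟩; exact x.2⟩
      left_inv := fun T => by
        apply Subtype.ext
        ext v
        simp only [Set.mem_image, Set.mem_setOf_eq]
        constructor
        · rintro ⟨x, hx, rfl⟩; exact hx
        · intro hv; exact ⟨⟨v, T.2 hv⟩, hv, rfl⟩
      right_inv := fun U => by
        ext x
        simp only [Set.mem_setOf_eq, Subtype.val_injective.mem_set_image] }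
  rw [Nat.card_congr e]
  letI : Fintype ↥C := Fintype.ofFinite _
  rw [Nat.card_eq_fintype_card, Fintype.card_set, ← Nat.card_coe_set_eq,
    Nat.card_eq_fintype_card]

lemma CW_numMaxIndep_card : numMaxIndep G = Nat.card {S : Set V // IsMaxIndepSet G S} :=
  (Nat.card_coe_set_eq _).symm

lemma CW_A [Fintype V] (hG : CWGood G C) : numMaxIndep G = 2 ^ coverNumber G := by
  have e : {S : Set V // IsMaxIndepSet G S} ≃ {T : Set V // T ⊆ C} :=
    { toFun := fun S => ⟨S.1 ∩ C, Set.inter_subset_right⟩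
      invFun := fun T => ⟨CWext G C T.1, CWext_max hG T.2⟩
      left_inv := fun S => Subtype.ext (CW_MIS_eq_ext hG.1 S.2).symm
      right_inv := fun T => Subtype.ext (CWext_inter T.2) }
  rw [CW_numMaxIndep_card, Nat.card_congr e, CW_card_subsets, hG.2.1]

lemma CW_B [Fintype V] (G : SimpleGraph V) (h : numMaxIndep G = 2 ^ coverNumber G) :
    ∃ C : Set V, CWGood G C := by
  classical
  obtain ⟨C, hC, hcard⟩ := CW_exists_min_cover G
  refine ⟨C, hC, hcard, ?_⟩
  -- the map S ↦ S ∩ C from maximal independent sets to subsets of C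
  set f : {S : Set V // IsMaxIndepSet G S} → {T : Set V // T ⊆ C} :=
    fun S => ⟨S.1 ∩ C, Set.inter_subset_right⟩ with hf
  have hinj : Function.Injective f := by
    rintro S S' hSS'
    have : S.1 ∩ C = S'.1 ∩ C := congrArg Subtype.val hSS'
    apply Subtype.ext
    rw [CW_MIS_eq_ext hC S.2, CW_MIS_eq_ext hC S'.2, this]
  have hcardeq : Nat.card {S : Set V // IsMaxIndepSet G S} = Nat.card {T : Set V // T ⊆ C} := by
    rw [← CW_numMaxIndep_card, h, CW_card_subsets, hcard]
  have hbij : Function.Bijective f :=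
    (Nat.bijective_iff_injective_and_card f).mpr ⟨hinj, hcardeq⟩
  have hsurj : ∀ T : Set V, T ⊆ C → ∃ S : Set V, IsMaxIndepSet G S ∧ S ∩ C = T := by
    intro T hT
    obtain ⟨S, hS⟩ := hbij.2 ⟨T, hT⟩
    exact ⟨S.1, S.2, congrArg Subtype.val hS⟩
  -- C is independent
  obtain ⟨S, hS, hSC⟩ := hsurj C le_rfl
  have hCS : C ⊆ S := by
    intro v hv
    have : v ∈ S ∩ C := hSC.symm ▸ hv
    exact this.1
  have hCind : IsIndepSet G C := fun u v hu hv => hS.1 (hCS hu) (hCS hv)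
  refine ⟨hCind, ?_⟩
  -- pendant vertices
  intro u huC
  obtain ⟨S, hS, hSC⟩ := hsurj (C \ {u}) Set.diff_subset
  have huS : u ∉ S := by
    intro huS
    have : u ∈ C \ {u} := hSC ▸ ⟨huS, huC⟩
    exact this.2 rfl
  have hex : ∃ v ∈ S, G.Adj u v := by
    by_contra hne
    push_neg at hne
    have hind : IsIndepSet G (insert u S) := by
      rintro a b (rfl | ha) (rfl | hb) hadj
      · exact G.irrefl hadj
      · exact hne b hb hadj
      · exact hne a ha hadj.symm
      · exact hS.1 ha hb hadj
    have := hS.2 _ hind (Set.subset_insert u S)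
    exact huS (this ▸ Set.mem_insert u S)
  obtain ⟨v, hvS, hadj⟩ := hex
  have hvC : v ∉ C := by
    intro hvC
    exact hCind huC hvC hadj
  refine ⟨v, hadj, ?_⟩
  -- v's only neighbor is u
  have hSe : S = CWext G C (S ∩ C) := CW_MIS_eq_ext hC hS
  have hv2 : ∀ w ∈ S ∩ C, ¬ G.Adj v w := by
    have : v ∈ CWext G C (S ∩ C) := hSe ▸ hvS
    rcases this with h' | h'
    · exact absurd h'.2 hvC
    · exact h'.2
  intro w hadj'
  by_contra hwu
  have hwC : w ∈ C := by
    rcases hC hadj' with h' | h'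
    · exact absurd h' hvC
    · exact h'
  have : w ∈ S ∩ C := by
    rw [hSC]
    exact ⟨hwC, hwu⟩
  exact hv2 w this hadj'

lemma CW_C1 {C : Set V} (hG : CWGood G C) : IsBipartite G := by
  refine ⟨C, fun u v hadj => ⟨fun hu hv => hG.2.2.1 hu hv hadj, fun hv => ?_⟩⟩
  rcases hG.1 hadj with h | h
  · exact h
  · exact absurd h hv

lemma CW_C2 [Fintype V] {C : Set V} (hG : CWGood G C) :
    inducedMatchingNumber G = matchingNumber G := by
  classical
  obtain ⟨hC, hcard, hCind, hpend⟩ := hG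
  have hsel : ∀ u : ↥C, ∃ v, G.Adj ↑u v ∧ ∀ w, G.Adj v w → w = ↑u := fun u => hpend u u.2
  choose ℓ hadj huniq using hsel
  have hℓC : ∀ u : ↥C, ℓ u ∉ C := fun u h => hCind u.2 h (hadj u)
  set F : ↥C → Sym2 V := fun u => s(↑u, ℓ u) with hF
  have hFinj : Function.Injective F := by
    intro u u' h
    rw [hF, Sym2.eq_iff] at h
    rcases h with ⟨h1, -⟩ | ⟨h1, -⟩
    · exact Subtype.ext h1
    · exact absurd (h1 ▸ u.2) (hℓC u')
  set M : Set (Sym2 V) := Set.range F with hM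
  have hdisj : ∀ u u' : ↥C, u ≠ u' → ∀ v : V, v ∈ F u → v ∉ F u' := by
    intro u u' huu' v hv hv'
    rw [hF] at hv hv'
    rw [Sym2.mem_iff] at hv hv'
    rcases hv with rfl | rfl <;> rcases hv' with h | h
    · exact huu' (Subtype.ext h)
    · exact hℓC u' (h ▸ u.2)
    · exact hℓC u (h ▸ u'.2)
    · exact huu' (Subtype.ext (huniq u ↑u' (h ▸ (hadj u').symm)).symm)
  have hMmatch : IsMatching G M := by
    constructor
    · rintro e ⟨u, rfl⟩
      exact (SimpleGraph.mem_edgeSet G).mpr (hadj u)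
    · rintro e ⟨u, rfl⟩ f ⟨u', rfl⟩ hef v hv
      exact hdisj u u' (fun h => hef (h ▸ rfl)) v hv
  have hMind : IsInducedMatching G M := by
    refine ⟨hMmatch, ?_⟩
    rintro e ⟨u, rfl⟩ f ⟨u', rfl⟩ hef x y hx hy hxy
    have huu' : u ≠ u' := fun h => hef (h ▸ rfl)
    rw [hF, Sym2.mem_iff] at hx hy
    rcases hx with rfl | rfl <;> rcases hy with rfl | rfl
    · exact hCind u.2 u'.2 hxy
    · exact huu' (Subtype.ext (huniq u' ↑u hxy.symm))
    · exact huu' (Subtype.ext (huniq u ↑u' hxy)).symm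
    · exact hℓC u' ((huniq u (ℓ u') hxy) ▸ u.2)
  have hMcard : M.ncard = C.ncard := by
    rw [hM, ← Set.image_univ, Set.ncard_image_of_injOn (Function.Injective.injOn hFinj),
      Set.ncard_univ, Nat.card_coe_set_eq]
  have h1 : coverNumber G ≤ inducedMatchingNumber G := by
    rw [← hcard, ← hMcard]
    exact CW_le_inducedMatchingNumber G hMind
  have h2 := CW_inducedMatchingNumber_le_matchingNumber G
  have h3 := CW_matchingNumber_le_coverNumber G
  omega

lemma CW_konig_aux [Fintype V] {A C : Set V}
    (hA : ∀ ⦃u v : V⦄, G.Adj u v → (u ∈ A ↔ v ∉ A))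
    (hC : IsVertexCover G C)
    (hmin : ∀ C' : Set V, IsVertexCover G C' → C.ncard ≤ C'.ncard) :
    ∃ f : ↥(C ∩ A) → V, Function.Injective f ∧
      ∀ x : ↥(C ∩ A), G.Adj ↑x (f x) ∧ f x ∉ A ∧ f x ∉ C := by
  classical
  set t : ↥(C ∩ A) → Finset V :=
    fun x => (Set.toFinite {v : V | G.Adj ↑x v ∧ v ∉ A ∧ v ∉ C}).toFinset with ht
  have hmem : ∀ (x : ↥(C ∩ A)) (v : V), v ∈ t x ↔ G.Adj ↑x v ∧ v ∉ A ∧ v ∉ C := by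
    intro x v
    rw [ht]
    exact Set.Finite.mem_toFinset _
  have hall : ∀ s : Finset ↥(C ∩ A), s.card ≤ (s.biUnion t).card := by
    intro s
    by_contra hlt
    push_neg at hlt
    set S : Set V := ↑(s.image Subtype.val) with hS
    set T : Set V := ↑(s.biUnion t) with hT
    have hSmem : ∀ v : V, v ∈ S ↔ ∃ x ∈ s, ↑x = v := by
      intro v
      rw [hS]
      simp [Finset.mem_image]
    have hSC : S ⊆ C := by
      intro v hv
      obtain ⟨x, -, rfl⟩ := (hSmem v).mp hv
      exact x.2.1
    have hSA : S ⊆ A := by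
      intro v hv
      obtain ⟨x, -, rfl⟩ := (hSmem v).mp hv
      exact x.2.2
    have hScard : S.ncard = s.card := by
      rw [hS, Set.ncard_coe_finset, Finset.card_image_of_injective _ Subtype.val_injective]
    have hTcard : T.ncard = (s.biUnion t).card := Set.ncard_coe_finset _
    -- the smaller cover
    have key : ∀ ⦃u v : V⦄, G.Adj u v → u ∈ C → u ∈ (C \ S) ∪ T ∨ v ∈ (C \ S) ∪ T := by
      intro u v hadj huC
      by_cases huS : u ∈ S
      · have hvA : v ∉ A := (hA hadj).mp (hSA huS)
        by_cases hvC : v ∈ C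
        · exact Or.inr (Or.inl ⟨hvC, fun h => hvA (hSA h)⟩)
        · obtain ⟨x, hx, rfl⟩ := (hSmem u).mp huS
          refine Or.inr (Or.inr ?_)
          rw [hT]
          simp only [Finset.coe_biUnion, Set.mem_iUnion, Finset.mem_coe]
          exact ⟨x, hx, (hmem x v).mpr ⟨hadj, hvA, hvC⟩⟩
      · exact Or.inl (Or.inl ⟨huC, huS⟩)
    have hC' : IsVertexCover G ((C \ S) ∪ T) := by
      intro u v hadj
      rcases hC hadj with h | h
      · exact key hadj h
      · exact (key hadj.symm h).symm
    have h1 := hmin _ hC'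
    have h2 : ((C \ S) ∪ T).ncard ≤ (C \ S).ncard + T.ncard := Set.ncard_union_le _ _
    have h3 : (C \ S).ncard = C.ncard - S.ncard := Set.ncard_diff hSC
    have h4 : S.ncard ≤ C.ncard := Set.ncard_le_ncard hSC
    omega
  obtain ⟨f, hfinj, hft⟩ := (Finset.all_card_le_biUnion_card_iff_exists_injective t).mp hall
  refine ⟨f, hfinj, fun x => ?_⟩
  exact (hmem x (f x)).mp (hft x)

lemma CW_konig [Fintype V] (hbip : IsBipartite G) :
    ∃ M : Set (Sym2 V), IsMatching G M ∧ M.ncard = coverNumber G := by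
  classical
  obtain ⟨A, hA⟩ := hbip
  obtain ⟨C, hC, hcard⟩ := CW_exists_min_cover G
  have hmin : ∀ C' : Set V, IsVertexCover G C' → C.ncard ≤ C'.ncard := by
    intro C' h
    rw [hcard]
    exact CW_coverNumber_le G h
  have hA' : ∀ ⦃u v : V⦄, G.Adj u v → (u ∈ Aᶜ ↔ v ∉ Aᶜ) := by
    intro u v h
    have := hA h
    simp only [Set.mem_compl_iff, not_not]
    tauto
  obtain ⟨f₁, hf₁inj, hf₁⟩ := CW_konig_aux (G := G) hA hC hmin
  obtain ⟨f₂, hf₂inj, hf₂⟩ := CW_konig_aux (G := G) hA' hC hmin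
  -- basic membership facts
  have p₁ : ∀ x : ↥(C ∩ A), (↑x : V) ∈ C ∧ (↑x : V) ∈ A ∧ f₁ x ∉ A ∧ f₁ x ∉ C :=
    fun x => ⟨x.2.1, x.2.2, (hf₁ x).2.1, (hf₁ x).2.2⟩
  have p₂ : ∀ x : ↥(C ∩ Aᶜ), (↑x : V) ∈ C ∧ (↑x : V) ∉ A ∧ f₂ x ∈ A ∧ f₂ x ∉ C := by
    intro x
    have h := hf₂ x
    refine ⟨x.2.1, x.2.2, ?_, h.2.2⟩
    have := h.2.1
    simpa using this
  set F₁ : ↥(C ∩ A) → Sym2 V := fun x => s(↑x, f₁ x) with hF₁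
  set F₂ : ↥(C ∩ Aᶜ) → Sym2 V := fun x => s(↑x, f₂ x) with hF₂
  have hF₁inj : Function.Injective F₁ := by
    intro x x' h
    rw [hF₁, Sym2.eq_iff] at h
    rcases h with ⟨h1, -⟩ | ⟨h1, -⟩
    · exact Subtype.ext h1
    · exact absurd (h1 ▸ (p₁ x).1) (p₁ x').2.2.2
  have hF₂inj : Function.Injective F₂ := by
    intro x x' h
    rw [hF₂, Sym2.eq_iff] at h
    rcases h with ⟨h1, -⟩ | ⟨h1, -⟩
    · exact Subtype.ext h1
    · exact absurd (h1 ▸ (p₂ x).1) (p₂ x').2.2.2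
  set M : Set (Sym2 V) := Set.range F₁ ∪ Set.range F₂ with hM
  -- no two edges of M share a vertex (including distinctness across the two ranges)
  have hdisj11 : ∀ (x x' : ↥(C ∩ A)), F₁ x ≠ F₁ x' → ∀ v : V, v ∈ F₁ x → v ∉ F₁ x' := by
    intro x x' hne v hv hv'
    rw [hF₁, Sym2.mem_iff] at hv hv'
    rcases hv with rfl | rfl <;> rcases hv' with h | h
    · exact hne (congrArg F₁ (Subtype.ext h))
    · exact (p₁ x').2.2.2 (h ▸ (p₁ x).1)
    · exact (p₁ x).2.2.2 (h ▸ (p₁ x').1)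
    · exact hne (congrArg F₁ (hf₁inj h))
  have hdisj22 : ∀ (x x' : ↥(C ∩ Aᶜ)), F₂ x ≠ F₂ x' → ∀ v : V, v ∈ F₂ x → v ∉ F₂ x' := by
    intro x x' hne v hv hv'
    rw [hF₂, Sym2.mem_iff] at hv hv'
    rcases hv with rfl | rfl <;> rcases hv' with h | h
    · exact hne (congrArg F₂ (Subtype.ext h))
    · exact (p₂ x').2.2.2 (h ▸ (p₂ x).1)
    · exact (p₂ x).2.2.2 (h ▸ (p₂ x').1)
    · exact hne (congrArg F₂ (hf₂inj h))
  have hdisj12 : ∀ (x : ↥(C ∩ A)) (x' : ↥(C ∩ Aᶜ)), ∀ v : V, v ∈ F₁ x → v ∉ F₂ x' := by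
    intro x x' v hv hv'
    rw [hF₁, Sym2.mem_iff] at hv
    rw [hF₂, Sym2.mem_iff] at hv'
    rcases hv with rfl | rfl <;> rcases hv' with h | h
    · exact (p₂ x').2.1 (h ▸ (p₁ x).2.1)
    · exact (p₂ x').2.2.2 (h ▸ (p₁ x).1)
    · exact (p₁ x).2.2.2 (h ▸ (p₂ x').1)
    · exact (p₁ x).2.2.1 (h ▸ (p₂ x').2.2.1)
  have hMmatch : IsMatching G M := by
    constructor
    · rintro e (⟨x, rfl⟩ | ⟨x, rfl⟩)
      · exact (SimpleGraph.mem_edgeSet G).mpr (hf₁ x).1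
      · exact (SimpleGraph.mem_edgeSet G).mpr (hf₂ x).1
    · rintro e (⟨x, rfl⟩ | ⟨x, rfl⟩) f (⟨x', rfl⟩ | ⟨x', rfl⟩) hef v hv
      · exact hdisj11 x x' hef v hv
      · exact hdisj12 x x' v hv
      · exact fun h => hdisj12 x' x v h hv
      · exact hdisj22 x x' hef v hv
  -- cardinality
  have hdisjranges : Disjoint (Set.range F₁) (Set.range F₂) := by
    rw [Set.disjoint_left]
    rintro e ⟨x, rfl⟩ ⟨x', he⟩
    have : (↑x : V) ∈ F₂ x' := he ▸ (by rw [hF₁]; simp)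
    exact hdisj12 x x' ↑x (by rw [hF₁]; simp) this
  have hr₁ : (Set.range F₁).ncard = (C ∩ A).ncard := by
    rw [← Set.image_univ, Set.ncard_image_of_injOn (Function.Injective.injOn hF₁inj),
      Set.ncard_univ, Nat.card_coe_set_eq]
  have hr₂ : (Set.range F₂).ncard = (C ∩ Aᶜ).ncard := by
    rw [← Set.image_univ, Set.ncard_image_of_injOn (Function.Injective.injOn hF₂inj),
      Set.ncard_univ, Nat.card_coe_set_eq]
  have hMcard : M.ncard = coverNumber G := by
    rw [hM, Set.ncard_union_eq hdisjranges, hr₁, hr₂, ← Set.diff_eq,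
      Set.ncard_inter_add_ncard_diff_eq_ncard, hcard]
  exact ⟨M, hMmatch, hMcard⟩

lemma CW_C3 [Fintype V] (hbip : IsBipartite G)
    (h : inducedMatchingNumber G = matchingNumber G) : ∃ C : Set V, CWGood G C := by
  classical
  obtain ⟨Mk, hMk, hMkcard⟩ := CW_konig hbip
  have hν : matchingNumber G = coverNumber G :=
    le_antisymm (CW_matchingNumber_le_coverNumber G) (hMkcard ▸ CW_le_matchingNumber G hMk)
  obtain ⟨M, hM, hMcard⟩ := CW_exists_max_inducedMatching G
  have hMcard' : M.ncard = coverNumber G := by rw [hMcard, h, hν]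
  obtain ⟨C, hC, hcard⟩ := CW_exists_min_cover G
  -- select the covered endpoint of each matching edge
  have hsel : ∀ e : ↥M, ∃ v : ↥C, (↑v : V) ∈ (e : Sym2 V) := by
    rintro ⟨e, he⟩
    induction e using Sym2.ind with
    | _ x y =>
      have hadj : G.Adj x y := (SimpleGraph.mem_edgeSet G).mp (hM.1.1 he)
      rcases hC hadj with h' | h'
      · exact ⟨⟨x, h'⟩, by simp⟩
      · exact ⟨⟨y, h'⟩, by simp⟩
  choose f hf using hsel
  have hfinj : Function.Injective f := by
    intro e e' hee'
    by_contra hne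
    have hne' : (e : Sym2 V) ≠ (e' : Sym2 V) := fun h' => hne (Subtype.ext h')
    exact hM.1.2 e.1 e.2 e'.1 e'.2 hne' ↑(f e) (hf e) (hee' ▸ hf e')
  have hcardeq : Nat.card ↥M = Nat.card ↥C := by
    rw [Nat.card_coe_set_eq, Nat.card_coe_set_eq, hMcard', hcard]
  have hbij : Function.Bijective f :=
    (Nat.bijective_iff_injective_and_card f).mpr ⟨hfinj, hcardeq⟩
  -- every vertex of C is the selected endpoint of its (unique) matching edge
  have hkey : ∀ (e : ↥M) (x : V), x ∈ (e : Sym2 V) → x ∈ C → x = ↑(f e) := by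
    intro e x hx hxC
    obtain ⟨e', he'⟩ := hbij.2 ⟨x, hxC⟩
    have hxe' : x ∈ (e' : Sym2 V) := by
      have := hf e'
      rw [he'] at this
      exact this
    by_cases hee : e' = e
    · subst hee; rw [he']
    · have hne : (e' : Sym2 V) ≠ (e : Sym2 V) := fun h' => hee (Subtype.ext h')
      exact absurd hx (hM.1.2 e'.1 e'.2 e.1 e.2 hne x hxe')
  have hCind : IsIndepSet G C := by
    intro u v hu hv hadj
    obtain ⟨e, he⟩ := hbij.2 ⟨u, hu⟩
    obtain ⟨e', he'⟩ := hbij.2 ⟨v, hv⟩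
    have hue : u ∈ (e : Sym2 V) := by have := hf e; rw [he] at this; exact this
    have hve' : v ∈ (e' : Sym2 V) := by have := hf e'; rw [he'] at this; exact this
    by_cases hee : e = e'
    · have h1 : u = ↑(f e) := hkey e u hue hu
      have h2 : v = ↑(f e) := hee ▸ hkey e' v hve' hv
      exact hadj.ne (h1.trans h2.symm)
    · have hne : (e : Sym2 V) ≠ (e' : Sym2 V) := fun h' => hee (Subtype.ext h')
      exact hM.2 e.1 e.2 e'.1 e'.2 hne u v hue hve' hadj
  refine ⟨C, hC, hcard, hCind, ?_⟩
  intro u huC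
  obtain ⟨e, he⟩ := hbij.2 ⟨u, huC⟩
  have hue : u ∈ (e : Sym2 V) := by have := hf e; rw [he] at this; exact this
  obtain ⟨b, hb⟩ := Sym2.mem_iff_exists.mp hue
  have hadj : G.Adj u b := (SimpleGraph.mem_edgeSet G).mp (hb ▸ hM.1.1 e.2)
  have hbe : b ∈ (e : Sym2 V) := by rw [hb]; simp
  have hbC : b ∉ C := by
    intro hbC
    have : b = ↑(f e) := hkey e b hbe hbC
    have : b = u := this.trans ((hkey e u hue huC).symm)
    exact hadj.ne this.symm
  refine ⟨b, hadj, ?_⟩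
  intro w hadj'
  have hwC : w ∈ C := by
    rcases hC hadj' with h' | h'
    · exact absurd h' hbC
    · exact h'
  obtain ⟨e', he'⟩ := hbij.2 ⟨w, hwC⟩
  have hwe' : w ∈ (e' : Sym2 V) := by have := hf e'; rw [he'] at this; exact this
  by_cases hee : e' = e
  · have : w = ↑(f e) := hkey e w (hee ▸ hwe') hwC
    rw [this, ← hkey e u hue huC]
  · have hne : (e' : Sym2 V) ≠ (e : Sym2 V) := fun h' => hee (Subtype.ext h')
    exact absurd hadj'.symm (hM.2 e'.1 e'.2 e.1 e.2 hne w b hwe' hbe)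

end Core

/-- `m(G) = 2 ^ β(G)` iff `G` is a Cameron-Walker bipartite graph. -/
theorem numMaxIndep_eq_two_pow_coverNumber_iff [Fintype V] (G : SimpleGraph V) :
    numMaxIndep G = 2 ^ coverNumber G ↔
      IsBipartite G ∧ inducedMatchingNumber G = matchingNumber G := by
  constructor
  · intro h
    obtain ⟨C, hG⟩ := CW_B G h
    exact ⟨CW_C1 hG, CW_C2 hG⟩
  · rintro ⟨hbip, heq⟩
    obtain ⟨C, hG⟩ := CW_C3 hbip heq
    exact CW_A hG
end

section
/- For a finite simple graph G, the number of maximal independent sets of G equals 3^ν(G) if and only if G is isomorphic to the disjoint union of s copies of the triangle K₃ and t isolated vertices, where s = ν(G) and t = |V(G)| − 3s; equivalently, if and only if every connected component of G is either a triangle (a complete graph on 3 vertices) or a single isolated vertex. -/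
variable {V : Type*}

/-!
Fix a maximum matching `M`. Its unmatched vertices are pairwise non-adjacent, so a maximal
independent set `S` is determined by `S ∩ V(M)`, hence by its pattern: for each edge of `M`, which
of its endpoints, if any, lies in `S`. This injects the maximal independent sets into the `3 ^ ν`
patterns, so `m(G) = 3 ^ ν(G)` exactly when every pattern is realized.

If every pattern is realized, realizing the empty pattern gives each edge `ab ∈ M` a common
unmatched neighbour `c` (two different ones would form an augmenting path), and realizing patterns
that choose one or two endpoints shows that `{a, b, c}` has no further neighbours, while all other
vertices are isolated. Conversely, if the components are triangles and points, each triangle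
contains exactly one edge of `M`, and a pattern is realized by keeping in each triangle the vertex
it prescribes (the third vertex for `0`) together with all isolated vertices.
-/

open SimpleGraph (ConnectedComponent)

theorem Set.eq_of_mem_of_ncard_le_three {α : Type*} {s : Set α} (hs : s.ncard ≤ 3) (hfin : s.Finite)
    {a b c d : α} (ha : a ∈ s) (hb : b ∈ s) (hc : c ∈ s) (hd : d ∈ s) (hab : a ≠ b) (hca : c ≠ a)
    (hcb : c ≠ b) (hda : d ≠ a) (hdb : d ≠ b) : c = d := by
  by_contra hcd
  have hsub : ({a, b, c, d} : Set α) ⊆ s := by simp [Set.insert_subset_iff, ha, hb, hc, hd]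
  have := Set.ncard_le_ncard hsub hfin
  rw [Set.ncard_insert_of_notMem (by simp [hab, hca.symm, hda.symm]),
    Set.ncard_insert_of_notMem (by simp [hcb.symm, hdb.symm]), Set.ncard_pair hcd] at this
  omega

theorem SimpleGraph.supp_connectedComponentMk_eq {G : SimpleGraph V} {T : Set V} {v : V}
    (hv : v ∈ T) (hT : ∀ x ∈ T, ∀ y, G.Adj x y → y ∈ T) (hreach : ∀ x ∈ T, G.Reachable v x) :
    (G.connectedComponentMk v).supp = T := by
  have hwalk : ∀ {a b : V}, G.Walk a b → a ∈ T → b ∈ T := by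
    intro a b p
    induction p with
    | nil => exact id
    | cons hab _ ih => exact fun ha => ih (hT _ ha _ hab)
  ext x
  exact ⟨fun hx => hwalk (ConnectedComponent.exact hx).symm.some hv,
    fun hx => ConnectedComponent.sound (hreach x hx).symm⟩

section IndepSet

variable {G : SimpleGraph V} {S : Set V}

theorem isMaxIndepSet_iff :
    IsMaxIndepSet G S ↔ IsIndepSet G S ∧ ∀ v ∉ S, ∃ w ∈ S, G.Adj v w := by
  refine ⟨fun hS => ⟨hS.1, fun v hv => ?_⟩, fun ⟨hS, hdom⟩ => ⟨hS, fun T hT hST => ?_⟩⟩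
  · by_contra! h
    have hind : IsIndepSet G (insert v S) := by
      rintro x y (rfl | hx) (rfl | hy) hxy
      · exact hxy.ne rfl
      · exact h y hy hxy
      · exact h x hx hxy.symm
      · exact hS.1 hx hy hxy
    exact hv (hS.2 _ hind (Set.subset_insert v S) ▸ Set.mem_insert v S)
  · refine hST.antisymm fun v hvT => ?_
    by_contra hvS
    obtain ⟨w, hwS, hvw⟩ := hdom v hvS
    exact hT hvT (hST hwS) hvw

end IndepSet

def matchedVerts (M : Set (Sym2 V)) : Set V := {v | ∃ e ∈ M, v ∈ e}

def IsMaximumMatching (G : SimpleGraph V) (M : Set (Sym2 V)) : Prop :=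
  IsMatching G M ∧ ∀ M', IsMatching G M' → M'.ncard ≤ M.ncard

section Matching

variable {G : SimpleGraph V} {M M' : Set (Sym2 V)} {e e' : Sym2 V} {u v x y a b : V}

theorem mem_matchedVerts_insert : v ∈ matchedVerts (insert e M) ↔ v ∈ e ∨ v ∈ matchedVerts M := by
  simp [matchedVerts]

theorem IsMatching.eq_of_mem_of_mem (hM : IsMatching G M) (he : e ∈ M) (he' : e' ∈ M)
    (hv : v ∈ e) (hv' : v ∈ e') : e = e' := by
  by_contra hne
  exact hM.2 e he e' he' hne v hv hv'

theorem IsMatching.mono (hM : IsMatching G M) (h : M' ⊆ M) : IsMatching G M' :=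
  ⟨h.trans hM.1, fun e he f hf => hM.2 e (h he) f (h hf)⟩

theorem IsMatching.notMem_matchedVerts_sdiff (hM : IsMatching G M) (he : e ∈ M) (hv : v ∈ e) :
    v ∉ matchedVerts (M \ {e}) := by
  rintro ⟨f, ⟨hf, hfe⟩, hvf⟩
  exact hfe (hM.eq_of_mem_of_mem hf he hvf hv)

theorem IsMatching.insert (hM : IsMatching G M) (huv : G.Adj u v) (hu : u ∉ matchedVerts M)
    (hv : v ∉ matchedVerts M) : IsMatching G (insert s(u, v) M) := by
  have hdisj : ∀ f ∈ M, ∀ x ∈ s(u, v), x ∉ f := by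
    rintro f hf x hx hxf
    rcases Sym2.mem_iff.mp hx with rfl | rfl
    exacts [hu ⟨f, hf, hxf⟩, hv ⟨f, hf, hxf⟩]
  refine ⟨Set.insert_subset huv hM.1, ?_⟩
  rintro e (rfl | he) f (rfl | hf) hef x hxe hxf
  · exact hef rfl
  · exact hdisj f hf x hxe hxf
  · exact hdisj e he x hxf hxe
  · exact hM.2 e he f hf hef x hxe hxf

variable [Finite V]

theorem ncard_insert_of_notMem_matchedVerts (hu : u ∉ matchedVerts M) :
    (insert s(u, v) M).ncard = M.ncard + 1 :=
  Set.ncard_insert_of_notMem fun h => hu ⟨_, h, Sym2.mem_mk_left u v⟩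

variable (G) in
theorem exists_isMaximumMatching : ∃ M, IsMaximumMatching G M ∧ M.ncard = matchingNumber G := by
  set N := {n | ∃ M, IsMatching G M ∧ M.ncard = n}
  have hbdd : BddAbove N := ⟨Nat.card (Sym2 V), by
    rintro _ ⟨M, -, rfl⟩
    exact Set.ncard_le_card M⟩
  have hne : N.Nonempty := ⟨0, ∅, ⟨Set.empty_subset _, by simp⟩, by simp⟩
  obtain ⟨M, hM, hcard⟩ := Nat.sSup_mem hne hbdd
  exact ⟨M, ⟨hM, fun M' hM' => hcard ▸ le_csSup hbdd ⟨M', hM', rfl⟩⟩, hcard⟩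

theorem IsMaximumMatching.not_adj (hM : IsMaximumMatching G M) (hu : u ∉ matchedVerts M)
    (hv : v ∉ matchedVerts M) : ¬ G.Adj u v := fun huv => by
  have := hM.2 _ (hM.1.insert huv hu hv)
  rw [ncard_insert_of_notMem_matchedVerts hu] at this
  omega

/-- There is no augmenting path `x a b y`. -/
theorem IsMaximumMatching.eq_of_adj_of_adj (hM : IsMaximumMatching G M) (hab : s(a, b) ∈ M)
    (hax : G.Adj a x) (hby : G.Adj b y) (hx : x ∉ matchedVerts M) (hy : y ∉ matchedVerts M) :
    x = y := by
  by_contra hxy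
  have ha : a ∈ matchedVerts M := ⟨_, hab, Sym2.mem_mk_left a b⟩
  have hb : b ∈ matchedVerts M := ⟨_, hab, Sym2.mem_mk_right a b⟩
  have hcard := Set.ncard_sdiff_singleton_add_one hab
  set M₀ := M \ {s(a, b)}
  have hM₀ : matchedVerts M₀ ⊆ matchedVerts M := fun v ⟨e, he, hv⟩ => ⟨e, he.1, hv⟩
  have ha₀ : a ∉ matchedVerts M₀ := hM.1.notMem_matchedVerts_sdiff hab (Sym2.mem_mk_left a b)
  have hb₀ : b ∉ matchedVerts M₀ := hM.1.notMem_matchedVerts_sdiff hab (Sym2.mem_mk_right a b)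
  have ha₁ : a ∉ matchedVerts (insert s(b, y) M₀) := by
    rw [mem_matchedVerts_insert, Sym2.mem_iff]
    rintro ((rfl | rfl) | h)
    exacts [(hM.1.1 hab).ne rfl, hy ha, ha₀ h]
  have hx₁ : x ∉ matchedVerts (insert s(b, y) M₀) := by
    rw [mem_matchedVerts_insert, Sym2.mem_iff]
    rintro ((rfl | rfl) | h)
    exacts [hx hb, hxy rfl, hx (hM₀ h)]
  have hM₂ := ((hM.1.mono Set.sdiff_subset).insert hby hb₀ fun h => hy (hM₀ h)).insert hax ha₁ hx₁
  have := hM.2 _ hM₂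
  rw [ncard_insert_of_notMem_matchedVerts ha₁, ncard_insert_of_notMem_matchedVerts hb₀] at this
  omega

end Matching

noncomputable def edgeFst (e : Sym2 V) : V := (Quot.out e).1

noncomputable def edgeSnd (e : Sym2 V) : V := (Quot.out e).2

noncomputable def edgePattern (S : Set V) (e : Sym2 V) : Fin 3 :=
  open Classical in if edgeFst e ∈ S then 1 else if edgeSnd e ∈ S then 2 else 0

section Pattern

variable {G : SimpleGraph V} {M : Set (Sym2 V)} {S T : Set V} {e : Sym2 V} {v : V}

@[simp]
theorem mk_edgeFst_edgeSnd (e : Sym2 V) : s(edgeFst e, edgeSnd e) = e := Quot.out_eq e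

theorem edgeFst_mem (e : Sym2 V) : edgeFst e ∈ e :=
  (congrArg (edgeFst e ∈ ·) (mk_edgeFst_edgeSnd e)).mp (Sym2.mem_mk_left _ _)

theorem edgeSnd_mem (e : Sym2 V) : edgeSnd e ∈ e :=
  (congrArg (edgeSnd e ∈ ·) (mk_edgeFst_edgeSnd e)).mp (Sym2.mem_mk_right _ _)

theorem adj_edgeFst_edgeSnd (he : e ∈ G.edgeSet) : G.Adj (edgeFst e) (edgeSnd e) := by
  rwa [← mk_edgeFst_edgeSnd e] at he

theorem reachable_edgeFst_of_mem (he : e ∈ G.edgeSet) (hv : v ∈ e) : G.Reachable (edgeFst e) v := by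
  rw [← mk_edgeFst_edgeSnd e, Sym2.mem_iff] at hv
  rcases hv with rfl | rfl
  exacts [.rfl, (adj_edgeFst_edgeSnd he).reachable]

theorem mem_iff_mem_of_edgePattern_eq (hS : edgeFst e ∈ S → edgeSnd e ∉ S)
    (hT : edgeFst e ∈ T → edgeSnd e ∉ T) (h : edgePattern S e = edgePattern T e) (hv : v ∈ e) :
    v ∈ S ↔ v ∈ T := by
  rw [← mk_edgeFst_edgeSnd e, Sym2.mem_iff] at hv
  unfold edgePattern at h
  rcases hv with rfl | rfl <;> split_ifs at h <;> simp_all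

variable [Finite V]

theorem IsMaximumMatching.mem_iff_forall_not_adj (hM : IsMaximumMatching G M)
    (hS : IsMaxIndepSet G S) (hv : v ∉ matchedVerts M) :
    v ∈ S ↔ ∀ w ∈ S ∩ matchedVerts M, ¬ G.Adj v w := by
  refine ⟨fun hvS w hw => hS.1 hvS hw.1, fun h => ?_⟩
  by_contra hvS
  obtain ⟨w, hwS, hvw⟩ := (isMaxIndepSet_iff.mp hS).2 v hvS
  by_cases hw : w ∈ matchedVerts M
  · exact h w ⟨hwS, hw⟩ hvw
  · exact hM.not_adj hv hw hvw

theorem IsMaximumMatching.eq_of_inter_matchedVerts_eq (hM : IsMaximumMatching G M)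
    (hS : IsMaxIndepSet G S) (hT : IsMaxIndepSet G T)
    (h : S ∩ matchedVerts M = T ∩ matchedVerts M) : S = T := by
  ext v
  by_cases hv : v ∈ matchedVerts M
  · simpa [hv] using congrArg (v ∈ ·) h
  · rw [hM.mem_iff_forall_not_adj hS hv, hM.mem_iff_forall_not_adj hT hv, h]

theorem IsMaximumMatching.injOn_edgePattern (hM : IsMaximumMatching G M) :
    Set.InjOn (fun S (e : M) => edgePattern S e) {S | IsMaxIndepSet G S} := by
  intro S hS T hT h
  refine hM.eq_of_inter_matchedVerts_eq hS hT (Set.ext fun v => and_congr_left ?_)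
  rintro ⟨e, he, hv⟩
  have hadj := adj_edgeFst_edgeSnd (hM.1.1 he)
  exact mem_iff_mem_of_edgePattern_eq (fun h1 h2 => hS.1 h1 h2 hadj)
    (fun h1 h2 => hT.1 h1 h2 hadj) (congrFun h ⟨e, he⟩) hv

end Pattern

def AllEdgePatternsRealized (G : SimpleGraph V) (M : Set (Sym2 V)) : Prop :=
  ∀ f : M → Fin 3, ∃ S, IsMaxIndepSet G S ∧ ∀ e : M, edgePattern S e = f e

theorem IsMaximumMatching.numMaxIndep_eq_three_pow_iff [Finite V] {G : SimpleGraph V}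
    {M : Set (Sym2 V)} (hM : IsMaximumMatching G M) :
    numMaxIndep G = 3 ^ M.ncard ↔ AllEdgePatternsRealized G M := by
  have hcard : Nat.card (M → Fin 3) = 3 ^ M.ncard := by simp [Nat.card_fun]
  rw [numMaxIndep, ← hM.injOn_edgePattern.ncard_image, ← hcard, ← Set.ncard_univ]
  refine ⟨fun h f => ?_, fun h => ?_⟩
  · obtain ⟨S, hS, hSf⟩ := (Set.eq_of_subset_of_ncard_le (Set.subset_univ _) h.ge).symm ▸
      Set.mem_univ f
    exact ⟨S, hS, congrFun hSf⟩
  · congr 1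
    refine Set.eq_univ_of_forall fun f => ?_
    obtain ⟨S, hS, hSf⟩ := h f
    exact ⟨S, hS, funext hSf⟩

def IsUnionOfTrianglesAndPoints (G : SimpleGraph V) : Prop :=
  ∀ c : G.ConnectedComponent, c.supp.ncard = 1 ∨ (c.supp.ncard = 3 ∧ G.IsClique c.supp)

section Realized

variable {G : SimpleGraph V} {M : Set (Sym2 V)} {e e' : Sym2 V} {a b a' b' c v w x z : V}

theorem AllEdgePatternsRealized.exists_isMaxIndepSet (hreal : AllEdgePatternsRealized G M)
    (hM : M ⊆ G.edgeSet) {X : Set V} (hX : ∀ ⦃x y⦄, s(x, y) ∈ M → x ∈ X → y ∉ X) :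
    ∃ S, IsMaxIndepSet G S ∧ ∀ v ∈ matchedVerts M, (v ∈ S ↔ v ∈ X) := by
  obtain ⟨S, hS, hSX⟩ := hreal fun e => edgePattern X e
  refine ⟨S, hS, ?_⟩
  rintro v ⟨e, he, hv⟩
  have hadj := adj_edgeFst_edgeSnd (hM he)
  exact mem_iff_mem_of_edgePattern_eq (fun h1 h2 => hS.1 h1 h2 hadj)
    (hX (by rwa [mk_edgeFst_edgeSnd])) (hSX ⟨e, he⟩) hv

theorem AllEdgePatternsRealized.not_adj_of_ne (hreal : AllEdgePatternsRealized G M)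
    (hM : IsMatching G M) (he : e ∈ M) (he' : e' ∈ M) (hne : e ≠ e') (hv : v ∈ e) (hw : w ∈ e') :
    ¬ G.Adj v w := by
  intro hvw
  have hX : ∀ ⦃x y⦄, s(x, y) ∈ M → x ∈ ({v, w} : Set V) → y ∉ ({v, w} : Set V) := by
    intro x y hxy hx hy
    have hsame : ∀ {p q}, s(p, q) ∈ M → p = v → q = w → False := by
      rintro p q hpq rfl rfl
      exact hne ((hM.eq_of_mem_of_mem hpq he (Sym2.mem_mk_left _ _) hv).symm.trans
        (hM.eq_of_mem_of_mem hpq he' (Sym2.mem_mk_right _ _) hw))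
    rcases hx with rfl | rfl <;> rcases hy with rfl | rfl
    · exact (hM.1 hxy).ne rfl
    · exact hsame hxy rfl rfl
    · exact hsame (Sym2.eq_swap ▸ hxy) rfl rfl
    · exact (hM.1 hxy).ne rfl
  obtain ⟨S, hS, hSX⟩ := hreal.exists_isMaxIndepSet hM.1 hX
  exact hS.1 ((hSX v ⟨e, he, hv⟩).mpr (by simp)) ((hSX w ⟨e', he', hw⟩).mpr (by simp)) hvw

variable [Finite V]

theorem IsMaximumMatching.exists_common_neighbor (hM : IsMaximumMatching G M)
    (hreal : AllEdgePatternsRealized G M) (hab : s(a, b) ∈ M) :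
    ∃ c ∉ matchedVerts M, G.Adj a c ∧ G.Adj b c := by
  obtain ⟨S, hS, hSM⟩ := hreal.exists_isMaxIndepSet hM.1.1 (X := ∅) (by simp)
  have hdisj : ∀ v ∈ matchedVerts M, v ∉ S := fun v hv => by simpa using hSM v hv
  obtain ⟨c, hcS, hac⟩ := (isMaxIndepSet_iff.mp hS).2 a (hdisj a ⟨_, hab, Sym2.mem_mk_left a b⟩)
  obtain ⟨c', hc'S, hbc'⟩ := (isMaxIndepSet_iff.mp hS).2 b (hdisj b ⟨_, hab, Sym2.mem_mk_right a b⟩)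
  have hc : c ∉ matchedVerts M := fun h => hdisj c h hcS
  obtain rfl := hM.eq_of_adj_of_adj hab hac hbc' hc fun h => hdisj c' h hc'S
  exact ⟨c, hc, hac, hbc'⟩

theorem IsMaximumMatching.not_adj_of_adj (hM : IsMaximumMatching G M)
    (hreal : AllEdgePatternsRealized G M) (hab : s(a, b) ∈ M) (ha'b' : s(a', b') ∈ M)
    (hne : s(a, b) ≠ s(a', b')) (hc : c ∉ matchedVerts M) (hac : G.Adj a c) : ¬ G.Adj a' c := by
  intro ha'c
  obtain ⟨S, hS, hSX⟩ := hreal.exists_isMaxIndepSet hM.1.1 (X := {a})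
    fun x y hxy hx hy => (hM.1.1 hxy).ne (hx.trans hy.symm)
  have haS : a ∈ S := (hSX a ⟨_, hab, Sym2.mem_mk_left a b⟩).mpr rfl
  have ha'S : a' ∉ S := by
    intro h
    obtain rfl : a' = a := (hSX a' ⟨_, ha'b', Sym2.mem_mk_left a' b'⟩).mp h
    exact hne (hM.1.eq_of_mem_of_mem hab ha'b' (Sym2.mem_mk_left _ _) (Sym2.mem_mk_left _ _))
  obtain ⟨y, hyS, ha'y⟩ := (isMaxIndepSet_iff.mp hS).2 a' ha'S
  by_cases hy : y ∈ matchedVerts M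
  · obtain rfl : y = a := (hSX y hy).mp hyS
    exact hreal.not_adj_of_ne hM.1 ha'b' hab hne.symm (Sym2.mem_mk_left _ _)
      (Sym2.mem_mk_left _ _) ha'y
  · -- `y` and `c` both equal the common neighbour of `a'` and `b'`
    obtain ⟨c', hc', -, hb'c'⟩ := hM.exists_common_neighbor hreal ha'b'
    obtain rfl := hM.eq_of_adj_of_adj ha'b' ha'c hb'c' hc hc'
    obtain rfl := hM.eq_of_adj_of_adj ha'b' ha'y hb'c' hy hc
    exact hS.1 haS hyS hac

theorem IsMaximumMatching.mem_triangle_of_adj (hM : IsMaximumMatching G M)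
    (hreal : AllEdgePatternsRealized G M) (hab : s(a, b) ∈ M) (hc : c ∉ matchedVerts M)
    (hac : G.Adj a c) (hbc : G.Adj b c) (hx : x ∈ ({a, b, c} : Set V)) (hxz : G.Adj x z) :
    z ∈ ({a, b, c} : Set V) := by
  by_cases hz : z ∈ matchedVerts M
  · obtain ⟨e, he, hze⟩ := hz
    obtain ⟨z', rfl⟩ := Sym2.mem_iff_exists.mp hze
    by_cases hne : s(a, b) = s(z, z')
    · rcases Sym2.mem_iff.mp (hne ▸ Sym2.mem_mk_left z z') with rfl | rfl <;> simp
    rcases hx with rfl | rfl | rfl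
    · exact absurd hxz (hreal.not_adj_of_ne hM.1 hab he hne (Sym2.mem_mk_left _ _) hze)
    · exact absurd hxz (hreal.not_adj_of_ne hM.1 hab he hne (Sym2.mem_mk_right _ _) hze)
    · exact absurd hxz.symm (hM.not_adj_of_adj hreal hab he hne hc hac)
  · rcases hx with rfl | rfl | rfl
    · simp [hM.eq_of_adj_of_adj hab hxz hbc hz hc]
    · simp [← hM.eq_of_adj_of_adj hab hac hxz hc hz]
    · exact absurd hxz.symm (hM.not_adj hz hc)

theorem IsMaximumMatching.ncard_supp_eq_three_and_isClique (hM : IsMaximumMatching G M)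
    (hreal : AllEdgePatternsRealized G M) (hab : s(a, b) ∈ M) :
    (G.connectedComponentMk a).supp.ncard = 3 ∧ G.IsClique (G.connectedComponentMk a).supp := by
  obtain ⟨c, hc, hac, hbc⟩ := hM.exists_common_neighbor hreal hab
  have hab' : G.Adj a b := hM.1.1 hab
  have hsupp : (G.connectedComponentMk a).supp = {a, b, c} := by
    refine SimpleGraph.supp_connectedComponentMk_eq (by simp)
      (fun x hx z hxz => hM.mem_triangle_of_adj hreal hab hc hac hbc hx hxz) ?_
    rintro x (rfl | rfl | rfl)
    exacts [.rfl, hab'.reachable, hac.reachable]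
  rw [hsupp]
  exact ⟨Set.ncard_eq_three.mpr ⟨a, b, c, hab'.ne, hac.ne, hbc.ne, rfl⟩,
    by simp [SimpleGraph.isClique_insert, hab', hac, hbc]⟩

end Realized

theorem IsMaximumMatching.isUnionOfTrianglesAndPoints [Finite V] {G : SimpleGraph V}
    {M : Set (Sym2 V)} (hM : IsMaximumMatching G M) (hreal : AllEdgePatternsRealized G M) :
    IsUnionOfTrianglesAndPoints G := by
  refine ConnectedComponent.ind fun v => ?_
  by_cases hiso : ∃ w, G.Adj v w
  · obtain ⟨w, hvw⟩ := hiso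
    obtain ⟨u, ⟨e, he, hue⟩, hvu⟩ : ∃ u ∈ matchedVerts M, G.Reachable v u := by
      by_cases hv : v ∈ matchedVerts M
      · exact ⟨v, hv, .rfl⟩
      by_cases hw : w ∈ matchedVerts M
      · exact ⟨w, hw, hvw.reachable⟩
      exact absurd hvw (hM.not_adj hv hw)
    obtain ⟨u', rfl⟩ := Sym2.mem_iff_exists.mp hue
    rw [ConnectedComponent.sound hvu]
    exact .inr (hM.ncard_supp_eq_three_and_isClique hreal he)
  · have hsupp : (G.connectedComponentMk v).supp = {v} := by
      refine SimpleGraph.supp_connectedComponentMk_eq rfl ?_ ?_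
      · rintro x rfl y hxy
        exact absurd ⟨y, hxy⟩ hiso
      · rintro x rfl
        rfl
    exact .inl (hsupp ▸ Set.ncard_singleton v)

section Triangles

variable [Finite V] {G : SimpleGraph V} {M : Set (Sym2 V)} {e e' : Sym2 V} {u v : V}

theorem IsUnionOfTrianglesAndPoints.adj_of_reachable (hG : IsUnionOfTrianglesAndPoints G)
    (huv : G.Reachable u v) (hne : u ≠ v) : G.Adj u v := by
  have hv : v ∈ (G.connectedComponentMk u).supp := ConnectedComponent.sound huv.symm
  rcases hG (G.connectedComponentMk u) with h1 | ⟨-, hclique⟩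
  · exact absurd ((Set.ncard_le_one_iff).mp h1.le rfl hv) hne
  · exact hclique rfl hv hne

theorem IsUnionOfTrianglesAndPoints.ncard_supp_eq_three (hG : IsUnionOfTrianglesAndPoints G)
    (huv : G.Adj u v) : (G.connectedComponentMk u).supp.ncard = 3 :=
  ((hG _).resolve_left fun h1 => huv.ne ((Set.ncard_le_one_iff).mp h1.le rfl
    (ConnectedComponent.sound huv.reachable.symm))).1

theorem IsUnionOfTrianglesAndPoints.eq_of_reachable_of_mem (hG : IsUnionOfTrianglesAndPoints G)
    (he : e ∈ G.edgeSet) (hu : G.Reachable (edgeFst e) u) (hv : G.Reachable (edgeFst e) v)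
    (hue : u ∉ e) (hve : v ∉ e) : u = v := by
  have hadj := adj_edgeFst_edgeSnd he
  have hmem : ∀ {x}, G.Reachable (edgeFst e) x → x ∈ (G.connectedComponentMk (edgeFst e)).supp :=
    fun h => ConnectedComponent.sound h.symm
  exact Set.eq_of_mem_of_ncard_le_three (hG.ncard_supp_eq_three hadj).le (Set.toFinite _)
    (hmem .rfl) (hmem hadj.reachable) (hmem hu) (hmem hv) hadj.ne
    (fun h => hue (h ▸ edgeFst_mem e)) (fun h => hue (h ▸ edgeSnd_mem e))
    (fun h => hve (h ▸ edgeFst_mem e)) (fun h => hve (h ▸ edgeSnd_mem e))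

theorem IsUnionOfTrianglesAndPoints.eq_of_reachable_edgeFst (hG : IsUnionOfTrianglesAndPoints G)
    (hM : IsMatching G M) (he : e ∈ M) (he' : e' ∈ M) (h : G.Reachable (edgeFst e) (edgeFst e')) :
    e = e' := by
  by_contra hne
  have hdisj : ∀ {v}, v ∈ e' → v ∉ e := fun hv hve => hM.2 e he e' he' hne _ hve hv
  exact (adj_edgeFst_edgeSnd (hM.1 he')).ne (hG.eq_of_reachable_of_mem (hM.1 he) h
    (h.trans (adj_edgeFst_edgeSnd (hM.1 he')).reachable)
    (hdisj (edgeFst_mem e')) (hdisj (edgeSnd_mem e')))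

theorem IsUnionOfTrianglesAndPoints.eq_of_edgePattern_singleton_eq
    (hG : IsUnionOfTrianglesAndPoints G) (he : e ∈ G.edgeSet) (hu : G.Reachable (edgeFst e) u)
    (hv : G.Reachable (edgeFst e) v) (h : edgePattern {u} e = edgePattern {v} e) : u = v := by
  have hsingle : ∀ w : V, edgeFst e ∈ ({w} : Set V) → edgeSnd e ∉ ({w} : Set V) :=
    fun w h1 h2 => (adj_edgeFst_edgeSnd he).ne (h1.trans h2.symm)
  have key : ∀ x ∈ e, x = u ↔ x = v :=
    fun x hx => mem_iff_mem_of_edgePattern_eq (hsingle u) (hsingle v) h hx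
  by_cases hue : u ∈ e
  · exact (key u hue).mp rfl
  by_cases hve : v ∈ e
  · exact ((key v hve).mpr rfl).symm
  exact hG.eq_of_reachable_of_mem he hu hv hue hve

theorem IsUnionOfTrianglesAndPoints.exists_edgePattern_singleton_eq
    (hG : IsUnionOfTrianglesAndPoints G) (he : e ∈ G.edgeSet) (i : Fin 3) :
    ∃ w, G.Reachable (edgeFst e) w ∧ edgePattern {w} e = i := by
  have hadj := adj_edgeFst_edgeSnd he
  fin_cases i
  · have hlt : ({edgeFst e, edgeSnd e} : Set V).ncard <
        (G.connectedComponentMk (edgeFst e)).supp.ncard := by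
      rw [Set.ncard_pair hadj.ne, hG.ncard_supp_eq_three hadj]
      norm_num
    obtain ⟨w, hw, hwe⟩ := Set.exists_mem_notMem_of_ncard_lt_ncard hlt
    refine ⟨w, (ConnectedComponent.exact hw).symm, ?_⟩
    simp only [Set.mem_insert_iff, Set.mem_singleton_iff, not_or] at hwe
    simp [edgePattern, Ne.symm hwe.1, Ne.symm hwe.2]
  · exact ⟨edgeFst e, .rfl, by simp [edgePattern]⟩
  · exact ⟨edgeSnd e, hadj.reachable, by simp [edgePattern, hadj.ne]⟩

end Triangles

theorem IsMaximumMatching.allEdgePatternsRealized [Finite V] {G : SimpleGraph V}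
    {M : Set (Sym2 V)} (hM : IsMaximumMatching G M) (hG : IsUnionOfTrianglesAndPoints G) :
    AllEdgePatternsRealized G M := by
  intro f
  set S := {v | ∀ e : M, G.Reachable (edgeFst e) v → edgePattern {v} e = f e}
  have hS : ∀ (e : M) {v}, G.Reachable (edgeFst e) v → (v ∈ S ↔ edgePattern {v} e = f e) := by
    refine fun e v hv => ⟨fun h => h e hv, fun h e' hv' => ?_⟩
    obtain rfl : e = e' :=
      Subtype.ext (hG.eq_of_reachable_edgeFst hM.1 e.2 e'.2 (hv.trans hv'.symm))
    exact h
  refine ⟨S, isMaxIndepSet_iff.mpr ⟨?_, ?_⟩, fun e => ?_⟩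
  · intro u v hu hv huv
    by_cases h : ∃ e : M, G.Reachable (edgeFst e) u
    · obtain ⟨e, hu'⟩ := h
      have hv' := hu'.trans huv.reachable
      exact huv.ne (hG.eq_of_edgePattern_singleton_eq (hM.1.1 e.2) hu' hv'
        (((hS e hu').mp hu).trans ((hS e hv').mp hv).symm))
    · have hmatched : ∀ {x}, G.Reachable u x → x ∉ matchedVerts M := fun hux ⟨e, he, hx⟩ =>
        h ⟨⟨e, he⟩, (reachable_edgeFst_of_mem (hM.1.1 he) hx).trans hux.symm⟩
      exact hM.not_adj (hmatched .rfl) (hmatched huv.reachable) huv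
  · intro v hv
    obtain ⟨e, hev, hne⟩ : ∃ e : M, G.Reachable (edgeFst e) v ∧ edgePattern {v} e ≠ f e := by
      simpa [S] using hv
    obtain ⟨w, hew, hw⟩ := hG.exists_edgePattern_singleton_eq (hM.1.1 e.2) (f e)
    exact ⟨w, (hS e hew).mpr hw, hG.adj_of_reachable (hev.symm.trans hew) fun h => hne (h ▸ hw)⟩
  · have hadj := adj_edgeFst_edgeSnd (hM.1.1 e.2)
    have h1 : edgeFst e ∈ S ↔ f e = 1 := by
      rw [hS e .rfl]
      simp [edgePattern, eq_comm]
    have h2 : edgeSnd e ∈ S ↔ f e = 2 := by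
      rw [hS e hadj.reachable]
      simp [edgePattern, hadj.ne, eq_comm]
    unfold edgePattern
    simp only [h1, h2]
    generalize f e = i
    fin_cases i <;> rfl

/-- `m(G) = 3 ^ ν(G)` iff every connected component of `G` is a
triangle or a single isolated vertex (i.e. `G ≅ νK₃ ∪ tK₁`). -/
theorem numMaxIndep_eq_three_pow_matchingNumber_iff [Fintype V] (G : SimpleGraph V) :
    numMaxIndep G = 3 ^ matchingNumber G ↔
      ∀ c : G.ConnectedComponent,
        c.supp.ncard = 1 ∨
          (c.supp.ncard = 3 ∧ ∀ u ∈ c.supp, ∀ v ∈ c.supp, u ≠ v → G.Adj u v) := by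
  obtain ⟨M, hM, hν⟩ := exists_isMaximumMatching G
  rw [← hν, hM.numMaxIndep_eq_three_pow_iff]
  exact ⟨hM.isUnionOfTrianglesAndPoints, hM.allEdgePatternsRealized⟩
end

section
/- For every finite simple graph G, the number of maximal independent sets of G is at least 2^ν₀(G), where ν₀(G) is the induced matching number of G. -/
/-!
Fix an induced matching `M` of maximum size. Choosing one endpoint of every edge of `M` gives an
independent set, because the edges of `M` are pairwise non-adjacent; extend it to a maximal one.
Two different choices differ at some edge `e`, and a maximal independent set containing both
choices would contain both endpoints of `e`. So the `2 ^ |M|` choices give pairwise distinct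
maximal independent sets.
-/

variable {V : Type*}

variable {G : SimpleGraph V}

lemma IsIndepSet.exists_isMaxIndepSet_superset [Finite V] {S : Set V} (hS : IsIndepSet G S) :
    ∃ T, IsMaxIndepSet G T ∧ S ⊆ T := by
  obtain ⟨T, hT, hmax⟩ :=
    (Set.toFinite {T : Set V | IsIndepSet G T ∧ S ⊆ T}).exists_maximal ⟨S, hS, subset_rfl⟩
  exact ⟨T, ⟨hT.1, fun T' hT' hsub => hsub.antisymm (hmax ⟨hT', hT.2.trans hsub⟩ hsub)⟩, hT.2⟩

lemma IsInducedMatching.isIndepSet_range {M : Set (Sym2 V)} (hM : IsInducedMatching G M)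
    {c : M → V} (hc : ∀ e : M, c e ∈ (e : Sym2 V)) : IsIndepSet G (Set.range c) := by
  rintro _ _ ⟨e, rfl⟩ ⟨f, rfl⟩ hadj
  obtain rfl | hef := eq_or_ne e f
  · exact G.irrefl hadj
  · exact hM.2 e e.2 f f.2 (Subtype.coe_ne_coe.2 hef) _ _ (hc e) (hc f) hadj

lemma SimpleGraph.Adj.ite_of_ne {x y : V} (hxy : G.Adj x y) {b b' : Bool} (hb : b ≠ b') :
    G.Adj (if b then x else y) (if b' then x else y) := by
  cases b <;> cases b' <;> simp_all [G.adj_comm]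

lemma IsInducedMatching.two_pow_ncard_le_numMaxIndep [Finite V] {M : Set (Sym2 V)}
    (hM : IsInducedMatching G M) : 2 ^ M.ncard ≤ numMaxIndep G := by
  have : Finite M := Set.toFinite M
  let p (e : M) : V × V := Quot.out (e : Sym2 V)
  have hp (e : M) : s((p e).1, (p e).2) = e := Quot.out_eq _
  have hadj (e : M) : G.Adj (p e).1 (p e).2 := G.mem_edgeSet.1 ((hp e).symm ▸ hM.1.1 e.2)
  let pick (g : M → Bool) (e : M) : V := if g e then (p e).1 else (p e).2
  have hpick (g : M → Bool) (e : M) : pick g e ∈ (e : Sym2 V) := by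
    rw [← hp e]
    dsimp only [pick]
    split
    · exact Sym2.mem_mk_left _ _
    · exact Sym2.mem_mk_right _ _
  choose T hT hpickT using fun g => (hM.isIndepSet_range (hpick g)).exists_isMaxIndepSet_superset
  have hinj : Function.Injective T := by
    intro g g' hgg'
    funext e
    by_contra hne
    have hmem : pick g e ∈ T g := hpickT g ⟨e, rfl⟩
    have hmem' : pick g' e ∈ T g := hgg' ▸ hpickT g' ⟨e, rfl⟩
    exact (hT g).1 hmem hmem' ((hadj e).ite_of_ne hne)
  calc 2 ^ M.ncard = Nat.card (M → Bool) := by simp [Nat.card_fun, Nat.card_coe_set_eq]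
    _ ≤ Nat.card {S // IsMaxIndepSet G S} :=
        Nat.card_le_card_of_injective (fun g => ⟨T g, hT g⟩)
          fun _ _ h => hinj (congrArg Subtype.val h)
    _ = numMaxIndep G := Nat.card_coe_set_eq _

lemma exists_isInducedMatching_ncard_eq_inducedMatchingNumber [Finite V] (G : SimpleGraph V) :
    ∃ M, IsInducedMatching G M ∧ M.ncard = inducedMatchingNumber G := by
  refine Nat.sSup_mem (s := {n | ∃ M, IsInducedMatching G M ∧ M.ncard = n}) ?_ ?_
  · exact ⟨0, ∅, ⟨⟨Set.empty_subset _, by simp⟩, by simp⟩, Set.ncard_empty _⟩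
  · exact ⟨Nat.card (Sym2 V), by rintro _ ⟨M, -, rfl⟩; exact Set.ncard_le_card M⟩

/-- For every finite simple graph `G`, `m(G) ≥ 2 ^ ν₀(G)`. -/
theorem two_pow_inducedMatchingNumber_le_numMaxIndep [Fintype V] (G : SimpleGraph V) :
    2 ^ inducedMatchingNumber G ≤ numMaxIndep G := by
  obtain ⟨M, hM, hcard⟩ := exists_isInducedMatching_ncard_eq_inducedMatchingNumber G
  exact hcard ▸ hM.two_pow_ncard_le_numMaxIndep
end

section
/- For every finite simple graph G and every vertex x of G, the number of maximal independent sets of G is at most m(G_x) + m(G \ x), where G_x is the induced subgraph of G on the vertices outside the closed neighborhood of x, and G \ x is the induced subgraph of G on the vertices other than x. -/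
variable {V : Type*}

/-- `m(G) ≤ m(G_x) + m(G \\ x)` for every vertex `x`. -/
theorem numMaxIndep_le_localization_add_delete [Fintype V] (G : SimpleGraph V) (x : V) :
    numMaxIndep G ≤
      numMaxIndep (G.induce (({x} ∪ G.neighborSet x)ᶜ)) +
        numMaxIndep (G.induce (({x} : Set V)ᶜ)) := by
  classical
  set N : Set V := {x} ∪ G.neighborSet x with hN
  set A : Set (Set V) := {S | IsMaxIndepSet G S ∧ x ∈ S} with hA
  set B : Set (Set V) := {S | IsMaxIndepSet G S ∧ x ∉ S} with hB
  have hsplit : {S : Set V | IsMaxIndepSet G S} = A ∪ B := by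
    ext S
    by_cases hx : x ∈ S <;> simp [hA, hB, hx]
  -- key: membership characterization in case x ∈ S
  have hchar : ∀ S ∈ A, ∀ s : V, s ∈ S ↔
      (s = x ∨ ∃ h : s ∈ Nᶜ, (⟨s, h⟩ : ↥(Nᶜ)) ∈ (Subtype.val ⁻¹' S : Set ↥(Nᶜ))) := by
    rintro S ⟨hS, hxS⟩ s
    constructor
    · intro hs
      by_cases hsx : s = x
      · exact Or.inl hsx
      · refine Or.inr ⟨?_, hs⟩
        intro hmem
        rcases hmem with h1 | h2
        · exact hsx h1
        · exact hS.1 hxS hs h2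
    · rintro (rfl | ⟨h, hmem⟩)
      · exact hxS
      · exact hmem
  have h1 : A.ncard ≤ numMaxIndep (G.induce (Nᶜ)) := by
    apply Set.ncard_le_ncard_of_injOn
      (f := fun S => (Subtype.val ⁻¹' S : Set ↥(Nᶜ)))
    · rintro S ⟨hS, hxS⟩
      constructor
      · intro u v hu hv hadj
        exact hS.1 hu hv hadj
      · intro T hT hsub
        -- lift T to G
        set T' : Set V := (Subtype.val '' T) ∪ {x} with hT'
        have hTind : IsIndepSet G T' := by
          rintro u v (⟨⟨u', hu'⟩, huT, rfl⟩ | hu) (⟨⟨v', hv'⟩, hvT, rfl⟩ | hv) hadj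
          · exact hT huT hvT hadj
          · simp only [Set.mem_singleton_iff] at hv; subst hv
            exact hu' (Or.inr (G.adj_symm hadj))
          · simp only [Set.mem_singleton_iff] at hu; subst hu
            exact hv' (Or.inr hadj)
          · simp only [Set.mem_singleton_iff] at hu hv; subst hu; subst hv
            exact G.irrefl hadj
        have hsubT' : S ⊆ T' := by
          intro s hs
          rcases (hchar S ⟨hS, hxS⟩ s).1 hs with rfl | ⟨h, hmem⟩
          · exact Or.inr rfl
          · exact Or.inl ⟨⟨s, h⟩, hsub hmem, rfl⟩
        have heq : S = T' := hS.2 T' hTind hsubT'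
        ext ⟨t, ht⟩
        constructor
        · exact fun h => hsub h
        · intro htT
          have : t ∈ T' := Or.inl ⟨⟨t, ht⟩, htT, rfl⟩
          rw [← heq] at this
          exact this
    · intro S1 hS1 S2 hS2 hf
      have hf' : (Subtype.val ⁻¹' S1 : Set ↥(Nᶜ)) = Subtype.val ⁻¹' S2 := hf
      ext s
      rw [hchar S1 hS1 s, hchar S2 hS2 s, hf']
  have hchar2 : ∀ S ∈ B, ∀ s : V, s ∈ S ↔
      (∃ h : s ∈ ({x} : Set V)ᶜ,
        (⟨s, h⟩ : ↥(({x} : Set V)ᶜ)) ∈ (Subtype.val ⁻¹' S : Set ↥(({x} : Set V)ᶜ))) := by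
    rintro S ⟨hS, hxS⟩ s
    constructor
    · intro hs
      refine ⟨?_, hs⟩
      intro hmem
      simp only [Set.mem_singleton_iff] at hmem
      subst hmem
      exact hxS hs
    · rintro ⟨h, hmem⟩
      exact hmem
  have h2 : B.ncard ≤ numMaxIndep (G.induce (({x} : Set V)ᶜ)) := by
    apply Set.ncard_le_ncard_of_injOn
      (f := fun S => (Subtype.val ⁻¹' S : Set ↥(({x} : Set V)ᶜ)))
    · rintro S ⟨hS, hxS⟩
      constructor
      · intro u v hu hv hadj
        exact hS.1 hu hv hadj
      · intro T hT hsub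
        set T' : Set V := Subtype.val '' T with hT'
        have hTind : IsIndepSet G T' := by
          rintro u v ⟨⟨u', hu'⟩, huT, rfl⟩ ⟨⟨v', hv'⟩, hvT, rfl⟩ hadj
          exact hT huT hvT hadj
        have hsubT' : S ⊆ T' := by
          intro s hs
          rcases (hchar2 S ⟨hS, hxS⟩ s).1 hs with ⟨h, hmem⟩
          exact ⟨⟨s, h⟩, hsub hmem, rfl⟩
        have heq : S = T' := hS.2 T' hTind hsubT'
        ext ⟨t, ht⟩
        constructor
        · exact fun h => hsub h
        · intro htT
          have : t ∈ T' := ⟨⟨t, ht⟩, htT, rfl⟩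
          rw [← heq] at this
          exact this
    · intro S1 hS1 S2 hS2 hf
      have hf' : (Subtype.val ⁻¹' S1 : Set ↥(({x} : Set V)ᶜ)) = Subtype.val ⁻¹' S2 := hf
      ext s
      rw [hchar2 S1 hS1 s, hchar2 S2 hS2 s, hf']
  calc numMaxIndep G = (A ∪ B).ncard := by rw [numMaxIndep, hsplit]
    _ ≤ A.ncard + B.ncard := Set.ncard_union_le A B
    _ ≤ _ := Nat.add_le_add h1 h2
end

section
/- Let G be a finite simple graph and let x be a leaf adjacent to y in G, i.e., x has degree 1 and xy is an edge of G. Then the number of maximal independent sets of G equals m(G_x) + m(G_y), where G_v denotes the induced subgraph of G on the vertices outside the closed neighborhood of v. -/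
variable {V : Type*}

lemma mem_s_iff (G : SimpleGraph V) (v u : V) :
    u ∈ (({v} ∪ G.neighborSet v)ᶜ : Set V) ↔ u ≠ v ∧ ¬ G.Adj v u := by
  simp [not_or]

lemma insert_indep (G : SimpleGraph V) (v : V)
    (T : Set (({v} ∪ G.neighborSet v)ᶜ : Set V))
    (hT : IsIndepSet (G.induce (({v} ∪ G.neighborSet v)ᶜ)) T) :
    IsIndepSet G (insert v (Subtype.val '' T)) := by
  rintro u w hu hw hadj
  rcases hu with rfl | ⟨a, ha, rfl⟩
  · rcases hw with rfl | ⟨b, hb, rfl⟩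
    · exact G.irrefl hadj
    · exact ((mem_s_iff G u b).mp b.2).2 hadj
  · rcases hw with rfl | ⟨b, hb, rfl⟩
    · exact ((mem_s_iff G w a).mp a.2).2 hadj.symm
    · exact hT ha hb hadj

lemma card_maxIndep_containing [Fintype V] (G : SimpleGraph V) (v : V) :
    {S : Set V | IsMaxIndepSet G S ∧ v ∈ S}.ncard =
      numMaxIndep (G.induce (({v} ∪ G.neighborSet v)ᶜ)) := by
  set s : Set V := ({v} ∪ G.neighborSet v)ᶜ with hs
  have key : Set.BijOn (fun T : Set s => insert v (Subtype.val '' T))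
      {T | IsMaxIndepSet (G.induce s) T} {S | IsMaxIndepSet G S ∧ v ∈ S} := by
    refine ⟨?_, ?_, ?_⟩
    · -- MapsTo
      rintro T ⟨hTi, hTm⟩
      refine ⟨⟨insert_indep G v T hTi, ?_⟩, Set.mem_insert _ _⟩
      intro U hU hsub
      have hTT' : T = Subtype.val ⁻¹' U := by
        apply hTm
        · intro a b ha hb hadj
          exact hU ha hb hadj
        · intro a ha
          exact hsub (Set.mem_insert_of_mem _ ⟨a, ha, rfl⟩)
      apply Set.Subset.antisymm hsub
      intro u hu
      by_cases huv : u = v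
      · exact huv ▸ Set.mem_insert _ _
      · have hna : ¬ G.Adj v u := fun h => hU (hsub (Set.mem_insert _ _)) hu h
        have hus : u ∈ s := (mem_s_iff G v u).mpr ⟨huv, hna⟩
        have : (⟨u, hus⟩ : s) ∈ T := hTT' ▸ hu
        exact Set.mem_insert_of_mem _ ⟨⟨u, hus⟩, this, rfl⟩
    · -- InjOn
      intro T1 _ T2 _ heq0
      have heq : insert v (Subtype.val '' T1) = insert v (Subtype.val '' T2) := heq0
      have hv1 : v ∉ (Subtype.val '' T1 : Set V) := by
        rintro ⟨a, _, hav⟩; exact ((mem_s_iff G v a).mp a.2).1 hav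
      have hv2 : v ∉ (Subtype.val '' T2 : Set V) := by
        rintro ⟨a, _, hav⟩; exact ((mem_s_iff G v a).mp a.2).1 hav
      have himg : (Subtype.val '' T1 : Set V) = Subtype.val '' T2 := by
        ext u
        constructor
        · intro hu
          have : u ∈ insert v (Subtype.val '' T2) := heq ▸ Set.mem_insert_of_mem _ hu
          rcases this with rfl | h
          · exact absurd hu hv1
          · exact h
        · intro hu
          have : u ∈ insert v (Subtype.val '' T1) := heq ▸ Set.mem_insert_of_mem _ hu
          rcases this with rfl | h
          · exact absurd hu hv2
          · exact h
      exact Set.image_injective.mpr Subtype.val_injective himg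
    · -- SurjOn
      rintro S ⟨⟨hSi, hSm⟩, hvS⟩
      refine ⟨Subtype.val ⁻¹' S, ⟨?_, ?_⟩, ?_⟩
      · intro a b ha hb hadj
        exact hSi ha hb hadj
      · intro T' hT' hsub
        have hSsub : S ⊆ insert v (Subtype.val '' T') := by
          intro u hu
          by_cases huv : u = v
          · exact huv ▸ Set.mem_insert _ _
          · have hna : ¬ G.Adj v u := fun h => hSi hvS hu h
            have hus : u ∈ s := (mem_s_iff G v u).mpr ⟨huv, hna⟩
            exact Set.mem_insert_of_mem _ ⟨⟨u, hus⟩, hsub hu, rfl⟩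
        have hSeq : S = insert v (Subtype.val '' T') :=
          hSm _ (insert_indep G v T' hT') hSsub
        apply Set.Subset.antisymm hsub
        intro a ha
        have : (a : V) ∈ S := by
          rw [hSeq]; exact Set.mem_insert_of_mem _ ⟨a, ha, rfl⟩
        exact this
      · show insert v (Subtype.val '' (Subtype.val ⁻¹' S)) = S
        ext u
        simp only [Set.mem_insert_iff, Set.mem_image, Set.mem_preimage]
        constructor
        · rintro (rfl | ⟨a, ha, rfl⟩)
          · exact hvS
          · exact ha
        · intro hu
          by_cases huv : u = v
          · exact Or.inl huv
          · have hna : ¬ G.Adj v u := fun h => hSi hvS hu h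
            exact Or.inr ⟨⟨u, (mem_s_iff G v u).mpr ⟨huv, hna⟩⟩, hu, rfl⟩
  rw [numMaxIndep, ← key.image_eq, Set.ncard_image_of_injOn key.injOn]

/-- If `x` is a leaf adjacent to `y` then `m(G) = m(G_x) + m(G_y)`. -/
theorem numMaxIndep_eq_of_leaf [Fintype V] (G : SimpleGraph V) [DecidableRel G.Adj]
    (x y : V) (hdeg : G.degree x = 1) (hxy : G.Adj x y) :
    numMaxIndep G =
      numMaxIndep (G.induce (({x} ∪ G.neighborSet x)ᶜ)) +
        numMaxIndep (G.induce (({y} ∪ G.neighborSet y)ᶜ)) := by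
  have huniq : ∀ z, G.Adj x z → z = y := by
    intro z hz
    have h1 : (G.neighborFinset x).card ≤ 1 := le_of_eq hdeg
    exact Finset.card_le_one.mp h1 z (by simp [hz]) y (by simp [hxy])
  have hsplit : ∀ S : Set V, IsMaxIndepSet G S → (x ∈ S ∨ y ∈ S) := by
    intro S ⟨hSi, hSm⟩
    by_cases hx : x ∈ S
    · exact Or.inl hx
    by_cases hy : y ∈ S
    · exact Or.inr hy
    exfalso
    have hind : IsIndepSet G (insert x S) := by
      rintro u w hu hw hadj
      rcases hu with rfl | hu
      · rcases hw with rfl | hw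
        · exact G.irrefl hadj
        · exact hy ((huniq _ hadj) ▸ hw)
      · rcases hw with rfl | hw
        · exact hy ((huniq _ hadj.symm) ▸ hu)
        · exact hSi hu hw hadj
    have := hSm _ hind (Set.subset_insert _ _)
    exact hx (this ▸ Set.mem_insert x S)
  have hdisj : Disjoint {S : Set V | IsMaxIndepSet G S ∧ x ∈ S}
      {S : Set V | IsMaxIndepSet G S ∧ y ∈ S} := by
    rw [Set.disjoint_left]
    rintro S ⟨⟨hSi, _⟩, hxS⟩ ⟨_, hyS⟩
    exact hSi hxS hyS hxy
  have hcup : {S : Set V | IsMaxIndepSet G S} =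
      {S : Set V | IsMaxIndepSet G S ∧ x ∈ S} ∪ {S : Set V | IsMaxIndepSet G S ∧ y ∈ S} := by
    ext S
    constructor
    · intro hS
      rcases hsplit S hS with h | h
      · exact Or.inl ⟨hS, h⟩
      · exact Or.inr ⟨hS, h⟩
    · rintro (⟨h, _⟩ | ⟨h, _⟩) <;> exact h
  rw [numMaxIndep, hcup, Set.ncard_union_eq hdisj (Set.toFinite _) (Set.toFinite _),
    card_maxIndep_containing, card_maxIndep_containing]
end

section
/- If H is an induced subgraph of a finite simple graph G, then the number of maximal independent sets of H is at most the number of maximal independent sets of G. -/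
variable {V : Type*}

theorem exists_maxIndep_superset (G : SimpleGraph V) (A : Set V) (hA : IsIndepSet G A) :
    ∃ T : Set V, IsMaxIndepSet G T ∧ A ⊆ T := by
  obtain ⟨m, hAm, hmax⟩ := zorn_subset_nonempty {T : Set V | IsIndepSet G T ∧ A ⊆ T}
    (fun c hcS hc hne => by
      refine ⟨⋃₀ c, ⟨?_, ?_⟩, fun t ht => Set.subset_sUnion_of_mem ht⟩
      · rintro u v ⟨tu, htu, hu⟩ ⟨tv, htv, hv⟩
        rcases hc.total htu htv with h | h
        · exact (hcS htv).1 (h hu) hv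
        · exact (hcS htu).1 hu (h hv)
      · obtain ⟨t, ht⟩ := hne
        exact (hcS ht).2.trans (Set.subset_sUnion_of_mem ht))
    A ⟨hA, Set.Subset.rfl⟩
  exact ⟨m, ⟨hmax.prop.1, fun T hT hmT => hmax.eq_of_subset ⟨hT, hAm.trans hmT⟩ hmT⟩, hAm⟩

/-- If `H` is an induced subgraph of `G` then `m(H) ≤ m(G)`. -/
theorem numMaxIndep_induce_le [Fintype V] (G : SimpleGraph V) (s : Set V) :
    numMaxIndep (G.induce s) ≤ numMaxIndep G := by
  classical
  have key : ∀ S : Set s, IsMaxIndepSet (G.induce s) S →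
      ∃ T : Set V, IsMaxIndepSet G T ∧ S = Subtype.val ⁻¹' T := by
    intro S hS
    have hind : IsIndepSet G (Subtype.val '' S) := by
      rintro u v ⟨a, ha, rfl⟩ ⟨b, hb, rfl⟩ hadj
      exact hS.1 ha hb hadj
    obtain ⟨T, hT, hST⟩ := exists_maxIndep_superset G _ hind
    refine ⟨T, hT, ?_⟩
    refine hS.2 _ (fun u v hu hv hadj => hT.1 hu hv hadj) ?_
    intro a ha
    exact hST ⟨a, ha, rfl⟩
  choose f hf1 hf2 using key
  apply Set.ncard_le_ncard_of_injOn (fun S => if h : IsMaxIndepSet (G.induce s) S then f S h else ∅)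
  · intro S hS
    simp only [Set.mem_setOf_eq] at hS ⊢
    rw [dif_pos hS]
    exact hf1 S hS
  · intro S hS S' hS' h
    simp only [Set.mem_setOf_eq] at hS hS'
    simp only [dif_pos hS, dif_pos hS'] at h
    rw [hf2 S hS, hf2 S' hS', h]
end

section
/- If G is a finite simple graph with matching number ν(G) = 1, then either m(G) ≤ 2, or G is isomorphic to the disjoint union of a triangle K₃ and t isolated vertices (where t = |V(G)| − 3), in which case m(G) = 3. -/
variable {V : Type*}

lemma matching_bdd [Fintype V] (G : SimpleGraph V) :
    BddAbove {n : ℕ | ∃ M : Set (Sym2 V), IsMatching G M ∧ M.ncard = n} := by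
  refine ⟨Nat.card (Sym2 V), ?_⟩
  rintro n ⟨M, _, rfl⟩
  simpa [Set.ncard_univ] using Set.ncard_le_ncard (Set.subset_univ M) Set.finite_univ

lemma shares [Fintype V] (G : SimpleGraph V) (h : matchingNumber G = 1)
    {a b x y : V} (hab : G.Adj a b) (hxy : G.Adj x y) :
    a = x ∨ a = y ∨ b = x ∨ b = y := by
  by_contra hcon
  push_neg at hcon
  obtain ⟨h1, h2, h3, h4⟩ := hcon
  have hne : s(a,b) ≠ s(x,y) := by
    intro hcon2
    rw [Sym2.eq_iff] at hcon2
    tauto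
  have hM : IsMatching G {s(a,b), s(x,y)} := by
    constructor
    · rintro e (rfl | rfl) <;> simpa [SimpleGraph.mem_edgeSet]
    · rintro e (rfl | rfl) f (rfl | rfl) hef v hv hvf <;>
        simp only [Sym2.mem_iff] at hv hvf <;>
        first
          | exact hef rfl
          | (rcases hv with rfl | rfl <;> rcases hvf with rfl | rfl <;> tauto)
  have h2mem : 2 ∈ {n : ℕ | ∃ M : Set (Sym2 V), IsMatching G M ∧ M.ncard = n} :=
    ⟨_, hM, Set.ncard_pair hne⟩
  have := le_csSup (matching_bdd G) h2mem
  rw [matchingNumber] at h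
  omega

lemma exists_adj [Fintype V] (G : SimpleGraph V) (h : matchingNumber G = 1) :
    ∃ a b, G.Adj a b := by
  by_contra hc
  push_neg at hc
  have hset : {n : ℕ | ∃ M : Set (Sym2 V), IsMatching G M ∧ M.ncard = n} = {0} := by
    ext n
    constructor
    · rintro ⟨M, hM, rfl⟩
      have hMe : M = ∅ := by
        ext e
        simp only [Set.mem_empty_iff_false, iff_false]
        intro he
        have h2 := hM.1 he
        induction e using Sym2.ind with
        | _ u v => exact hc u v h2
      simp [hMe]
    · rintro rfl
      exact ⟨∅, ⟨Set.empty_subset _, fun e he => absurd he (Set.notMem_empty e)⟩, by simp⟩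
  rw [matchingNumber, hset, csSup_singleton] at h
  exact one_ne_zero h.symm

lemma star_case [Fintype V] (G : SimpleGraph V) {c : V}
    (hc : ∀ u v, G.Adj u v → u = c ∨ v = c) : numMaxIndep G ≤ 2 := by
  set S1 : Set V := {v | ¬ G.Adj c v} with hS1
  set S2 : Set V := {v | v ≠ c} with hS2
  have hsub : {S : Set V | IsMaxIndepSet G S} ⊆ {S1, S2} := by
    rintro S ⟨hind, hmax⟩
    by_cases hcS : c ∈ S
    · left
      refine hmax S1 ?_ ?_
      · intro u v hu hv hadj
        rcases hc u v hadj with rfl | rfl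
        · exact hv hadj
        · exact hu hadj.symm
      · intro v hv
        exact hind hcS hv
    · right
      refine hmax S2 ?_ ?_
      · intro u v hu hv hadj
        rcases hc u v hadj with rfl | rfl
        · exact hu rfl
        · exact hv rfl
      · intro v hv h'
        exact hcS (h' ▸ hv)
  calc numMaxIndep G ≤ ({S1, S2} : Set (Set V)).ncard :=
        Set.ncard_le_ncard hsub (Set.toFinite _)
    _ ≤ 2 := (Set.ncard_insert_le _ _).trans (by simp)

lemma tri_count [Fintype V] (G : SimpleGraph V) {a b c : V}
    (hiff : ∀ u v : V, G.Adj u v ↔ u ∈ ({a,b,c} : Set V) ∧ v ∈ ({a,b,c} : Set V) ∧ u ≠ v)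
    (hab : a ≠ b) (hac : a ≠ c) (hbc : b ≠ c) :
    numMaxIndep G = 3 := by
  set T : Set V := {a,b,c} with hT
  set I : Set V := Tᶜ with hI
  have haT : a ∈ T := by simp [hT]
  have hbT : b ∈ T := by simp [hT]
  have hcT : c ∈ T := by simp [hT]
  have hindep : ∀ x ∈ T, IsIndepSet G (insert x I) := by
    intro x hx u v hu hv hadj
    obtain ⟨huT, hvT, huv⟩ := (hiff u v).1 hadj
    have hu' : u = x := by
      rcases hu with rfl | hu
      · rfl
      · exact absurd huT hu
    have hv' : v = x := by
      rcases hv with rfl | hv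
      · rfl
      · exact absurd hvT hv
    exact huv (hu'.trans hv'.symm)
  have hmaxind : ∀ x ∈ T, IsMaxIndepSet G (insert x I) := by
    intro x hx
    refine ⟨hindep x hx, fun T' hT' hsub => Set.Subset.antisymm hsub ?_⟩
    intro w hw
    by_contra hwmem
    have hwT : w ∈ T := by
      by_contra h'
      exact hwmem (Set.mem_insert_iff.2 (Or.inr h'))
    have hwx : w ≠ x := fun h' => hwmem (h' ▸ Set.mem_insert _ _)
    have hadj : G.Adj x w := (hiff x w).2 ⟨hx, hwT, hwx.symm⟩
    exact hT' (hsub (Set.mem_insert _ _)) hw hadj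
  have hset : {S : Set V | IsMaxIndepSet G S} = {insert a I, insert b I, insert c I} := by
    ext S
    constructor
    · rintro ⟨hind, hmax⟩
      have hIS : I ⊆ S := by
        have hunion : IsIndepSet G (S ∪ I) := by
          intro u v hu hv hadj
          obtain ⟨huT, hvT, huv⟩ := (hiff u v).1 hadj
          have hu' : u ∈ S := hu.resolve_right (fun h' => h' huT)
          have hv' : v ∈ S := hv.resolve_right (fun h' => h' hvT)
          exact hind hu' hv' hadj
        have heq := hmax (S ∪ I) hunion Set.subset_union_left
        rw [heq]
        exact Set.subset_union_right
      have hex : ∃ x ∈ T, x ∈ S := by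
        by_contra hno
        push_neg at hno
        have hsub : S ⊆ insert a I := by
          intro w hw
          by_cases hwT : w ∈ T
          · exact absurd hw (hno w hwT)
          · exact Set.mem_insert_iff.2 (Or.inr hwT)
        have heq := hmax (insert a I) (hindep a haT) hsub
        exact hno a haT (heq ▸ Set.mem_insert _ _)
      obtain ⟨x, hxT, hxS⟩ := hex
      have hSeq : S = insert x I := by
        refine Set.Subset.antisymm ?_ (Set.insert_subset hxS hIS)
        intro w hw
        by_cases hwT : w ∈ T
        · have hwx : w = x := by
            by_contra hwx
            exact hind hw hxS ((hiff w x).2 ⟨hwT, hxT, hwx⟩)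
          exact hwx ▸ Set.mem_insert _ _
        · exact Set.mem_insert_iff.2 (Or.inr hwT)
      have hx3 : x = a ∨ x = b ∨ x = c := by simpa [hT] using hxT
      rcases hx3 with rfl | rfl | rfl <;> simp [hSeq]
    · intro hS
      rcases hS with rfl | rfl | rfl
      · exact hmaxind a haT
      · exact hmaxind b hbT
      · exact hmaxind c hcT
  have hnI : ∀ x ∈ T, x ∉ I := by
    intro x hx hxI
    exact hxI hx
  have hins : ∀ x ∈ T, ∀ y ∈ T, x ≠ y → insert x I ≠ insert y I := by
    intro x hx y hy hxy hcon
    have : x ∈ insert y I := hcon ▸ Set.mem_insert _ _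
    rcases this with h' | h'
    · exact hxy h'
    · exact hnI x hx h'
  rw [numMaxIndep, hset]
  exact Set.ncard_eq_three.mpr ⟨_, _, _, hins a haT b hbT hab, hins a haT c hcT hac,
    hins b hbT c hcT hbc, rfl⟩

/-- If `ν(G) = 1` then either `m(G) ≤ 2`, or `G` is a triangle
together with isolated vertices, in which case `m(G) = 3`. -/
theorem numMaxIndep_of_matchingNumber_one [Fintype V] (G : SimpleGraph V)
    (h : matchingNumber G = 1) :
    numMaxIndep G ≤ 2 ∨
      ((∃ T : Set V, T.ncard = 3 ∧
          ∀ u v : V, G.Adj u v ↔ u ∈ T ∧ v ∈ T ∧ u ≠ v) ∧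
        numMaxIndep G = 3) := by
  obtain ⟨a, b, hab⟩ := exists_adj G h
  by_cases htri : ∃ c, G.Adj a c ∧ G.Adj b c
  · right
    obtain ⟨c, hac, hbc⟩ := htri
    have hne_ab : a ≠ b := hab.ne
    have hne_ac : a ≠ c := hac.ne
    have hne_bc : b ≠ c := hbc.ne
    have key : ∀ u v : V, G.Adj u v → u ∈ ({a,b,c} : Set V) := by
      intro u v huv
      by_contra hu
      simp only [Set.mem_insert_iff, Set.mem_singleton_iff] at hu
      push_neg at hu
      obtain ⟨hua, hub, huc⟩ := hu
      have s1 := shares G h huv hab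
      have s2 := shares G h huv hac
      have s3 := shares G h huv hbc
      have hva : v = a ∨ v = b := by tauto
      rcases hva with rfl | rfl
      · rcases s3 with h' | h' | h' | h' <;> tauto
      · rcases s2 with h' | h' | h' | h' <;> tauto
    have hiff : ∀ u v : V, G.Adj u v ↔
        u ∈ ({a,b,c} : Set V) ∧ v ∈ ({a,b,c} : Set V) ∧ u ≠ v := by
      intro u v
      constructor
      · intro huv
        exact ⟨key u v huv, key v u huv.symm, huv.ne⟩
      · rintro ⟨hu, hv, huv⟩
        simp only [Set.mem_insert_iff, Set.mem_singleton_iff] at hu hv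
        rcases hu with rfl | rfl | rfl <;> rcases hv with rfl | rfl | rfl <;>
          first
            | exact absurd rfl huv
            | assumption
            | exact hab.symm
            | exact hac.symm
            | exact hbc.symm
    refine ⟨⟨{a,b,c}, ?_, hiff⟩, tri_count G hiff hne_ab hne_ac hne_bc⟩
    exact Set.ncard_eq_three.mpr ⟨a, b, c, hne_ab, hne_ac, hne_bc, rfl⟩
  · left
    by_cases hca : ∀ u v, G.Adj u v → u = a ∨ v = a
    · exact star_case G hca
    · push_neg at hca
      obtain ⟨u, v, huv, hua, hva⟩ := hca
      have hs := shares G h huv hab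
      have hw : ∃ w, G.Adj b w ∧ w ≠ a := by
        rcases hs with h' | h' | h' | h'
        · exact absurd h' hua
        · exact ⟨v, h' ▸ huv, hva⟩
        · exact absurd h' hva
        · exact ⟨u, (h' ▸ huv).symm, hua⟩
      obtain ⟨w, hbw, hwa⟩ := hw
      refine star_case G (c := b) ?_
      intro x y hxy
      by_contra hcon
      push_neg at hcon
      obtain ⟨hxb, hyb⟩ := hcon
      have s1 := shares G h hxy hab
      have s2 := shares G h hxy hbw
      have haw : G.Adj a w := by
        have hx_or : x = a ∨ y = a := by tauto
        rcases hx_or with rfl | rfl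
        · rcases s2 with h' | h' | h' | h'
          · exact absurd h' hab.ne
          · exact absurd h'.symm hwa
          · exact absurd h' hyb
          · exact h' ▸ hxy
        · rcases s2 with h' | h' | h' | h'
          · exact absurd h' hxb
          · exact h' ▸ hxy.symm
          · exact absurd h' hab.ne
          · exact absurd h'.symm hwa
      exact htri ⟨w, haw, hbw⟩
end
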